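/- arXiv:2010.11552 — 6 statements merged into one kernel-verified Lean document; each statement's English description precedes it below -/
import Mathlib

section
/- Let a, b ∈ [0,1] and let λ, γ > 0 be constants satisfying λ(1−γ) + (e^λ − 1 − λ)(1 + γ²) ≤ 0. Then (1/2)·e^{λ(a−γb)} + (1/2)·e^{λ(b−γa)} ≤ 1. Equivalently: if X is a random variable with P(X=a)=P(X=b)=1/2, and X̄ = b when X = a and X̄ = a when X = b, then E[e^{λ(X−γX̄)}] ≤ 1. -/
open MeasureTheory ProbabilityTheory Real

noncomputable section

/-- Fair coin (`Bernoulli(1/2)`) distribution on `Bool`. -/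
def coin : Measure Bool := (PMF.uniformOfFintype Bool).toMeasure

instance : IsProbabilityMeasure coin := PMF.toMeasure.isProbabilityMeasure _

/-- Relative entropy (KL divergence) `∫ log (dμ/dν) dμ`. -/
def klDiv' {α : Type*} [MeasurableSpace α] (μ ν : Measure α) : ℝ :=
  ∫ x, Real.log ((μ.rnDeriv ν x).toReal) ∂μ

/-- Training loss in the random-subset setting. -/
def trainLoss {Z W : Type*} (n : ℕ) (loss : W → Z → ℝ)
    (x : ((Fin n × Bool → Z) × (Fin n → Bool)) × W) : ℝ :=
  (∑ i, loss x.2 (x.1.1 (i, x.1.2 i))) / n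

/-- Test loss in the random-subset setting. -/
def testLoss {Z W : Type*} (n : ℕ) (loss : W → Z → ℝ)
    (x : ((Fin n × Bool → Z) × (Fin n → Bool)) × W) : ℝ :=
  (∑ i, loss x.2 (x.1.1 (i, !x.1.2 i))) / n

/-- Population loss. -/
def popLoss {Z W : Type*} [MeasurableSpace Z] (PZ : Measure Z)
    (loss : W → Z → ℝ) (w : W) : ℝ :=
  ∫ z, loss w z ∂PZ


lemma exp_le_quad_of_nonpos {x : ℝ} (hx : x ≤ 0) : exp x ≤ 1 + x + x ^ 2 / 2 := by
  have hq := Real.quadratic_le_exp_of_nonneg (neg_nonneg.2 hx)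
  have h1 : exp (-x) * exp x = 1 := by rw [← Real.exp_add]; simp
  have h2 : 0 < exp x := Real.exp_pos x
  nlinarith [sq_nonneg (x^2), sq_nonneg x]

lemma convex_exp_bound {t y : ℝ} (ht0 : 0 ≤ t) (ht1 : t ≤ 1) :
    exp (y * t) ≤ 1 + t * (exp y - 1) := by
  have := convexOn_exp.2 (Set.mem_univ (0:ℝ)) (Set.mem_univ y)
    (by linarith : (0:ℝ) ≤ 1 - t) ht0 (by ring)
  simp only [smul_eq_mul, mul_zero, Real.exp_zero, mul_one] at this
  calc exp (y * t) = exp ((1-t) * 0 + t * y) := by ring_nf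
    _ ≤ (1-t) * 1 + t * exp y := by simpa using this
    _ = 1 + t * (exp y - 1) := by ring

lemma key_pos {t : ℝ} (ht0 : 0 ≤ t) (ht1 : t ≤ 1) {l : ℝ} (hl : 0 ≤ l) :
    exp (l * t) ≤ 1 + l * t + t ^ 2 * (exp l - 1 - l) := by
  set F : ℝ → ℝ := fun y => 1 + y * t + t ^ 2 * (exp y - 1 - y) - exp (y * t) with hFdef
  have hF : ∀ y : ℝ, HasDerivAt F (t + t ^ 2 * (exp y - 1) - exp (y * t) * t) y := by
    intro y
    have h1 : HasDerivAt (fun y : ℝ => y * t) t y := hasDerivAt_mul_const t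
    have h2 : HasDerivAt (fun y : ℝ => exp (y * t)) (exp (y * t) * t) y := h1.exp
    have h3 : HasDerivAt (fun y : ℝ => exp y) (exp y) y := Real.hasDerivAt_exp y
    have h4 : HasDerivAt (fun y : ℝ => 1 + y * t + t ^ 2 * (exp y - 1 - y))
        (t + t ^ 2 * (exp y - 1)) y := by
      have := ((hasDerivAt_const y (1:ℝ)).add h1).add
        (((h3.sub_const 1).sub (hasDerivAt_id y)).const_mul (t ^ 2))
      convert this using 1
      · rfl
      · rfl
      · funext x; simp only [Pi.add_apply, Pi.sub_apply, id]
      · ring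
    exact h4.sub h2
  have hmono : MonotoneOn F (Set.Ici 0) := by
    apply monotoneOn_of_deriv_nonneg (convex_Ici 0)
    · exact (Differentiable.continuous (fun y => (hF y).differentiableAt)).continuousOn
    · intro y _; exact (hF y).differentiableAt.differentiableWithinAt
    · intro y hy
      rw [(hF y).deriv]
      have hb := convex_exp_bound (y := y) ht0 ht1
      nlinarith [Real.exp_pos y]
  have h0 : F 0 = 0 := by simp [hFdef]
  have := hmono (Set.self_mem_Ici) (Set.mem_Ici.2 hl) hl
  rw [h0] at this
  simp only [hFdef] at this
  linarith

lemma key {t : ℝ} (ht1 : t ≤ 1) {l : ℝ} (hl : 0 ≤ l) :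
    exp (l * t) ≤ 1 + l * t + t ^ 2 * (exp l - 1 - l) := by
  rcases le_or_gt 0 t with h | h
  · exact key_pos h ht1 hl
  · have h1 : exp (l * t) ≤ 1 + l * t + (l * t) ^ 2 / 2 :=
      exp_le_quad_of_nonpos (by nlinarith)
    have h2 : 1 + l + l ^ 2 / 2 ≤ exp l := Real.quadratic_le_exp_of_nonneg hl
    nlinarith [sq_nonneg t, sq_nonneg l]

/-- the basic two-point exponential inequality. -/
theorem stmt0 (a b lam gam : ℝ) (ha : a ∈ Set.Icc (0:ℝ) 1) (hb : b ∈ Set.Icc (0:ℝ) 1)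
    (hlam : 0 < lam) (hgam : 0 < gam)
    (hcond : lam * (1 - gam) + (Real.exp lam - 1 - lam) * (1 + gam ^ 2) ≤ 0) :
    (1/2) * Real.exp (lam * (a - gam * b)) + (1/2) * Real.exp (lam * (b - gam * a)) ≤ 1 ∧
    ∫ s, Real.exp (lam * ((if s then b else a) - gam * (if s then a else b))) ∂coin ≤ 1 := by

  have hD : 0 ≤ Real.exp lam - 1 - lam := by nlinarith [Real.add_one_le_exp lam]
  obtain ⟨ha0, ha1⟩ := ha; obtain ⟨hb0, hb1⟩ := hb
  have h1 := key (t := a - gam * b) (by nlinarith) hlam.le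
  have h2 := key (t := b - gam * a) (by nlinarith) hlam.le
  have hab : (0:ℝ) ≤ a + b := by linarith
  have hc2 : (lam * (1 - gam) + (Real.exp lam - 1 - lam) * (1 + gam ^ 2)) * (a + b) ≤ 0 :=
    mul_nonpos_of_nonpos_of_nonneg hcond hab
  have p1 : 0 ≤ (Real.exp lam - 1 - lam) * (1 + gam ^ 2) * (a - a ^ 2 + b - b ^ 2) :=
    mul_nonneg (mul_nonneg hD (by positivity)) (by nlinarith)
  have p2 : 0 ≤ (Real.exp lam - 1 - lam) * (gam * (a * b)) :=
    mul_nonneg hD (mul_nonneg hgam.le (mul_nonneg ha0 hb0))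
  have main : (1/2) * Real.exp (lam * (a - gam * b)) +
      (1/2) * Real.exp (lam * (b - gam * a)) ≤ 1 := by nlinarith [h1, h2, hc2, p1, p2]
  refine ⟨main, ?_⟩
  have : ∫ s, Real.exp (lam * ((if s then b else a) - gam * (if s then a else b))) ∂coin
      = (1/2) * Real.exp (lam * (b - gam * a)) + (1/2) * Real.exp (lam * (a - gam * b)) := by
    rw [coin, PMF.integral_eq_sum]
    simp [Fintype.sum_bool, PMF.uniformOfFintype_apply, ENNReal.toReal_inv]
  rw [this]; linarith
end
end

section
/- For every λ > 0 and every real y with y ≤ λ, it holds that e^y ≤ 1 + y + ((e^λ − 1 − λ)/λ²)·y². -/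
open MeasureTheory ProbabilityTheory Real

noncomputable section

lemma exp_shift (x : ℝ) : Real.exp x = 1 + x + ∑' n : ℕ, x^(n+2) / Nat.factorial (n+2) := by
  have h : Real.exp x = ∑' n : ℕ, x ^ n / Nat.factorial n := by
    rw [Real.exp_eq_exp_ℝ, NormedSpace.exp_eq_tsum_div]
  have hs := Real.summable_pow_div_factorial x
  have := Summable.sum_add_tsum_nat_add (f := fun n => x ^ n / Nat.factorial n) 2 hs
  rw [h, ← this]
  simp [Finset.sum_range_succ]

/-- `e^y ≤ 1 + y + ((e^λ − 1 − λ)/λ²) y²` for `y ≤ λ`. -/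
theorem stmt1 (lam y : ℝ) (hlam : 0 < lam) (hy : y ≤ lam) :
    Real.exp y ≤ 1 + y + ((Real.exp lam - 1 - lam) / lam ^ 2) * y ^ 2 := by
  rcases le_or_gt y 0 with hy0 | hy0
  · -- exp y ≤ 1 + y + y^2/2 and (e^λ-1-λ)/λ² ≥ 1/2
    have h1 : Real.exp y ≤ 1 + y + y ^ 2 / 2 := by
      have hg : MonotoneOn (fun x : ℝ => Real.exp x - 1 - x - x ^ 2 / 2) (Set.Iic 0) := by
        apply monotoneOn_of_deriv_nonneg (convex_Iic 0)
        · fun_prop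
        · fun_prop
        · intro x hx
          have hd : HasDerivAt (fun x : ℝ => Real.exp x - 1 - x - x ^ 2 / 2)
              (Real.exp x - 1 - ((2:ℕ) * x ^ (2-1)) / 2) x := by
            have := (((Real.hasDerivAt_exp x).sub_const 1).sub (hasDerivAt_id x)).sub
              ((hasDerivAt_pow 2 x).div_const 2)
            simpa [Pi.sub_def] using this
          rw [hd.deriv]
          push_cast
          nlinarith [Real.add_one_le_exp x]
      have := hg (Set.mem_Iic.2 hy0) (Set.mem_Iic.2 le_rfl) hy0
      norm_num [Real.exp_zero] at this
      linarith
    have h2 : 1 / 2 ≤ (Real.exp lam - 1 - lam) / lam ^ 2 := by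
      rw [le_div_iff₀ (by positivity)]
      nlinarith [Real.quadratic_le_exp_of_nonneg hlam.le]
    nlinarith [sq_nonneg y]
  · -- 0 < y ≤ lam : termwise tsum comparison
    have hsy := Real.summable_pow_div_factorial y
    have hsl := Real.summable_pow_div_factorial lam
    have hsy2 : Summable (fun n : ℕ => y^(n+2) / Nat.factorial (n+2)) :=
      by exact_mod_cast hsy.comp_injective (add_left_injective 2)
    have hsl2 : Summable (fun n : ℕ => lam^(n+2) / Nat.factorial (n+2)) :=
      by exact_mod_cast hsl.comp_injective (add_left_injective 2)
    have key : ∑' n : ℕ, y^(n+2) / Nat.factorial (n+2)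
        ≤ (y ^ 2 / lam ^ 2) * ∑' n : ℕ, lam^(n+2) / Nat.factorial (n+2) := by
      rw [← tsum_mul_left]
      refine Summable.tsum_le_tsum (fun n => ?_) hsy2 (hsl2.mul_left _)
      have hyl : y ^ n ≤ lam ^ n := pow_le_pow_left₀ hy0.le hy n
      have : y ^ (n+2) = y ^ 2 * y ^ n := by ring
      have h2 : y ^ 2 / lam ^ 2 * (lam ^ (n+2) / Nat.factorial (n+2))
          = y ^ 2 * lam ^ n / Nat.factorial (n+2) := by
        field_simp
        ring
      rw [this, h2]
      gcongr
    have hexp_y := exp_shift y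
    have hexp_l := exp_shift lam
    have hEl : ∑' n : ℕ, lam^(n+2) / Nat.factorial (n+2) = Real.exp lam - 1 - lam := by
      linarith
    rw [hexp_y]
    have : (Real.exp lam - 1 - lam) / lam ^ 2 * y ^ 2
        = (y ^ 2 / lam ^ 2) * (Real.exp lam - 1 - lam) := by ring
    rw [this, ← hEl]
    linarith [key]
end
end

section
/- Let n ≥ 2, let c₁, …, cₙ ∈ [−1, 1], and let ε₁, …, εₙ be i.i.d. Rademacher random variables. Then E[exp(((n−1)/2)·((1/n)·Σᵢ εᵢ cᵢ)²)] ≤ √n. In particular, in the random-subset setting, for every fixed hypothesis w and fixed supersample z̃, E_{P_S}[exp(((n−1)/2)·(L_{z̃(S̄)}(w) − L_{z̃(S)}(w))²)] ≤ √n, where L_{z̃(S)}(w) = (1/n)·Σᵢ ℓ(w, z̃_{i+Sᵢn}) and L_{z̃(S̄)}(w) is defined analogously with S̄ the componentwise complement of S. -/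
open MeasureTheory ProbabilityTheory Real

set_option maxHeartbeats 1000000

noncomputable section

lemma coin_singleton (b : Bool) : coin {b} = 2⁻¹ := by
  rw [coin, PMF.toMeasure_apply_singleton _ _ (measurableSet_singleton b),
    PMF.uniformOfFintype_apply]
  simp

lemma pi_coin_singleton {n : ℕ} (s : Fin n → Bool) :
    ((Measure.pi fun _ : Fin n => coin) {s}).toReal = (1/2 : ℝ) ^ n := by
  rw [← Set.univ_pi_singleton s, Measure.pi_pi]
  simp [coin_singleton]

lemma pi_coin_int_prod {n : ℕ} (f : Fin n → Bool → ℝ) :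
    ∫ s : Fin n → Bool, ∏ i, f i (s i) ∂(Measure.pi fun _ : Fin n => coin)
      = ∏ i, (f i true + f i false) / 2 := by
  rw [integral_fintype .of_finite]; simp only [Measure.real]
  have h1 : ∀ s : Fin n → Bool,
      ((Measure.pi fun _ : Fin n => coin) {s}).toReal • ∏ i, f i (s i)
        = ∏ i, (f i (s i) / 2) := by
    intro s
    rw [pi_coin_singleton, smul_eq_mul, Finset.prod_div_distrib, Finset.prod_const,
      Finset.card_univ, Fintype.card_fin, one_div, inv_pow]
    ring
  rw [Finset.sum_congr rfl (fun s _ => h1 s)]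
  have h2 : ∀ i : Fin n, (f i true + f i false) / 2 = ∑ b : Bool, f i b / 2 := by
    intro i; simp; ring
  rw [Finset.prod_congr rfl (fun i _ => h2 i)]
  rw [Finset.prod_univ_sum]
  rw [← Fintype.piFinset_univ]

lemma exp_quad_integrable (t : ℝ) :
    Integrable (fun g : ℝ => Real.exp (t * g - g ^ 2 / 2)) := by
  have h : (fun g : ℝ => Real.exp (t * g - g ^ 2 / 2))
      = fun g => Real.exp (t ^ 2 / 2) * Real.exp (-(1/2 : ℝ) * (g - t) ^ 2) := by
    funext g; rw [← Real.exp_add]; ring_nf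
  rw [h]
  exact ((integrable_exp_neg_mul_sq (by norm_num : (0:ℝ) < 1/2)).comp_sub_right t).const_mul _

lemma gauss_id {a : ℝ} (ha : 0 ≤ a) (y : ℝ) :
    Real.exp (a * y ^ 2)
      = (Real.sqrt (2 * π))⁻¹ * ∫ g : ℝ, Real.exp (Real.sqrt (2 * a) * y * g - g ^ 2 / 2) := by
  have ht : (Real.sqrt (2 * a) * y) ^ 2 = 2 * a * y ^ 2 := by
    rw [mul_pow, Real.sq_sqrt (by linarith)]
  have h1 : ∀ g : ℝ, Real.sqrt (2 * a) * y * g - g ^ 2 / 2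
      = a * y ^ 2 + (-(1/2 : ℝ) * (g - Real.sqrt (2 * a) * y) ^ 2) := by
    intro g; linear_combination ht / 2
  have h2 : ∫ g : ℝ, Real.exp (Real.sqrt (2 * a) * y * g - g ^ 2 / 2)
      = Real.exp (a * y ^ 2) * Real.sqrt (2 * π) := by
    calc ∫ g : ℝ, Real.exp (Real.sqrt (2 * a) * y * g - g ^ 2 / 2)
        = ∫ g : ℝ, Real.exp (a * y ^ 2) * Real.exp (-(1/2 : ℝ) * (g - Real.sqrt (2 * a) * y) ^ 2) := by
          congr 1; funext g; rw [h1 g, Real.exp_add]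
      _ = Real.exp (a * y ^ 2) * ∫ g : ℝ, Real.exp (-(1/2 : ℝ) * (g - Real.sqrt (2 * a) * y) ^ 2) :=
          integral_const_mul _ _
      _ = Real.exp (a * y ^ 2) * ∫ g : ℝ, Real.exp (-(1/2 : ℝ) * g ^ 2) := by
          rw [integral_sub_right_eq_self (fun g : ℝ => Real.exp (-(1/2 : ℝ) * g ^ 2)) _]
      _ = Real.exp (a * y ^ 2) * Real.sqrt (2 * π) := by
          rw [integral_gaussian, show π / (1/2 : ℝ) = 2 * π by ring]
  rw [h2]
  have hne : Real.sqrt (2 * π) ≠ 0 := by positivity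
  field_simp

lemma key_s3 (n : ℕ) (hn : 2 ≤ n) (c : Fin n → ℝ) (hc : ∀ i, |c i| ≤ 1) :
    ∫ s : Fin n → Bool,
        Real.exp (((n - 1 : ℝ)/2) * (((∑ i, (if s i then 1 else -1) * c i) / n) ^ 2))
        ∂(Measure.pi fun _ : Fin n => coin) ≤ Real.sqrt n := by
  set μn : Measure (Fin n → Bool) := Measure.pi fun _ : Fin n => coin with hμn
  have hn1 : (1:ℝ) ≤ (n:ℝ) := by exact_mod_cast Nat.one_le_of_lt hn
  have hnpos : (0:ℝ) < n := by linarith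
  have hnne : (n:ℝ) ≠ 0 := ne_of_gt hnpos
  set a : ℝ := ((n:ℝ) - 1)/2 with ha_def
  have ha : 0 ≤ a := by rw [ha_def]; linarith
  have h2a : 2 * a = (n:ℝ) - 1 := by rw [ha_def]; ring
  set u : ℝ := Real.sqrt (2 * a) with hu_def
  have hu2 : u ^ 2 = (n:ℝ) - 1 := by rw [hu_def, Real.sq_sqrt (by linarith), h2a]
  set M : (Fin n → Bool) → ℝ := fun s => (∑ i, (if s i then 1 else -1) * c i) / n with hM
  set F : (Fin n → Bool) → ℝ → ℝ := fun s g => Real.exp (u * M s * g - g ^ 2 / 2) with hF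
  set C : ℝ := (Real.sqrt (2 * π))⁻¹ with hC
  have hCpos : 0 < Real.sqrt (2 * π) := by positivity
  have hFint : ∀ s : Fin n → Bool,
      Integrable (fun g : ℝ => (μn {s}).toReal • F s g) := by
    intro s
    exact (exp_quad_integrable (u * M s)).const_mul ((μn {s}).toReal)
  have step1 : ∫ s : Fin n → Bool, Real.exp (a * (M s) ^ 2) ∂μn
      = C * ∫ g : ℝ, ∑ s : Fin n → Bool, (μn {s}).toReal • F s g := by
    calc ∫ s : Fin n → Bool, Real.exp (a * (M s) ^ 2) ∂μn
        = ∫ s : Fin n → Bool, (C * ∫ g : ℝ, F s g) ∂μn := by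
          congr 1; funext s; exact gauss_id ha (M s)
      _ = C * ∫ s : Fin n → Bool, (∫ g : ℝ, F s g) ∂μn := integral_const_mul _ _
      _ = C * ∑ s : Fin n → Bool, (μn {s}).toReal • ∫ g : ℝ, F s g := by
          rw [integral_fintype .of_finite]; rfl
      _ = C * ∑ s : Fin n → Bool, ∫ g : ℝ, (μn {s}).toReal • F s g := by
          congr 1; exact Finset.sum_congr rfl fun s _ => (integral_smul _ _).symm
      _ = C * ∫ g : ℝ, ∑ s : Fin n → Bool, (μn {s}).toReal • F s g := by
          rw [integral_finset_sum _ (fun s _ => hFint s)]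
  have hpt : ∀ g : ℝ, ∑ s : Fin n → Bool, (μn {s}).toReal • F s g
      ≤ Real.exp (-(1/(2*(n:ℝ))) * g ^ 2) := by
    intro g
    have hsum : ∑ s : Fin n → Bool, (μn {s}).toReal • F s g
        = ∫ s : Fin n → Bool, F s g ∂μn := (integral_fintype .of_finite).symm
    rw [hsum]
    set t : ℝ := u * g / n with htdef
    have hFs : ∀ s : Fin n → Bool, F s g
        = (∏ i, Real.exp (t * ((if s i then 1 else -1) * c i))) * Real.exp (-(g ^ 2 / 2)) := by
      intro s
      rw [← Real.exp_sum, ← Real.exp_add]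
      simp only [hF, hM]
      rw [← Finset.mul_sum]
      rw [htdef]
      field_simp
      ring
    have hint : ∫ s : Fin n → Bool, F s g ∂μn
        = (∏ i, Real.cosh (t * c i)) * Real.exp (-(g ^ 2 / 2)) := by
      calc ∫ s : Fin n → Bool, F s g ∂μn
          = ∫ s : Fin n → Bool,
              (∏ i, Real.exp (t * ((if s i then 1 else -1) * c i))) * Real.exp (-(g ^ 2 / 2)) ∂μn := by
            congr 1; funext s; exact hFs s
        _ = (∫ s : Fin n → Bool,
              ∏ i, Real.exp (t * ((if s i then 1 else -1) * c i)) ∂μn) * Real.exp (-(g ^ 2 / 2)) :=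
            integral_mul_const _ _
        _ = (∏ i, (Real.exp (t * ((if true then 1 else -1) * c i))
              + Real.exp (t * ((if false then 1 else -1) * c i))) / 2) * Real.exp (-(g ^ 2 / 2)) := by
            rw [pi_coin_int_prod (fun i b => Real.exp (t * ((if b then 1 else -1) * c i)))]
        _ = (∏ i, Real.cosh (t * c i)) * Real.exp (-(g ^ 2 / 2)) := by
            congr 1
            refine Finset.prod_congr rfl fun i _ => ?_
            rw [Real.cosh_eq]
            norm_num
    rw [hint]
    have hprod : (∏ i, Real.cosh (t * c i)) ≤ Real.exp ((n:ℝ) * t ^ 2 / 2) := by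
      calc (∏ i : Fin n, Real.cosh (t * c i))
          ≤ ∏ _i : Fin n, Real.exp (t ^ 2 / 2) := by
            apply Finset.prod_le_prod
            · intro i _; positivity
            · intro i _
              refine le_trans (Real.cosh_le_exp_half_sq _) (Real.exp_le_exp.mpr ?_)
              have h1 : (t * c i) ^ 2 ≤ t ^ 2 := by
                have h2 : (c i) ^ 2 ≤ 1 := by
                  have := hc i
                  nlinarith [sq_abs (c i), abs_nonneg (c i)]
                nlinarith [sq_nonneg t]
              linarith
        _ = Real.exp ((n:ℝ) * t ^ 2 / 2) := by
            rw [Finset.prod_const, Finset.card_univ, ← Real.exp_nat_mul]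
            congr 1
            simp
            ring
    calc (∏ i, Real.cosh (t * c i)) * Real.exp (-(g ^ 2 / 2))
        ≤ Real.exp ((n:ℝ) * t ^ 2 / 2) * Real.exp (-(g ^ 2 / 2)) :=
          mul_le_mul_of_nonneg_right hprod (Real.exp_nonneg _)
      _ = Real.exp ((n:ℝ) * t ^ 2 / 2 + -(g ^ 2 / 2)) := (Real.exp_add _ _).symm
      _ = Real.exp (-(1/(2*(n:ℝ))) * g ^ 2) := by
          congr 1
          rw [htdef, div_pow, mul_pow, hu2]
          field_simp
          ring
  have hint_sum : Integrable (fun g : ℝ => ∑ s : Fin n → Bool, (μn {s}).toReal • F s g) :=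
    integrable_finset_sum _ (fun s _ => hFint s)
  have step2 : ∫ g : ℝ, ∑ s : Fin n → Bool, (μn {s}).toReal • F s g
      ≤ ∫ g : ℝ, Real.exp (-(1/(2*(n:ℝ))) * g ^ 2) := by
    apply integral_mono hint_sum _ hpt
    have hpos : (0:ℝ) < 1/(2*(n:ℝ)) := by positivity
    exact integrable_exp_neg_mul_sq hpos
  have hgauss : ∫ g : ℝ, Real.exp (-(1/(2*(n:ℝ))) * g ^ 2)
      = Real.sqrt n * Real.sqrt (2 * π) := by
    rw [integral_gaussian, ← Real.sqrt_mul (le_of_lt hnpos)]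
    congr 1
    field_simp
  calc ∫ s : Fin n → Bool, Real.exp (((n:ℝ) - 1)/2 * (((∑ i, (if s i then 1 else -1) * c i) / n) ^ 2)) ∂μn
      = C * ∫ g : ℝ, ∑ s : Fin n → Bool, (μn {s}).toReal • F s g := step1
    _ ≤ C * ∫ g : ℝ, Real.exp (-(1/(2*(n:ℝ))) * g ^ 2) := by
        apply mul_le_mul_of_nonneg_left step2
        rw [hC]; positivity
    _ = Real.sqrt n := by
        rw [hgauss, hC]
        field_simp

/-- sub-Gaussian moment bound `E[exp(((n−1)/2) Δ²)] ≤ √n`, both for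
Rademacher averages and for the train/test loss difference in the random-subset setting. -/
theorem stmt3 {Z W : Type*} (n : ℕ) (hn : 2 ≤ n) (c : Fin n → ℝ)
    (hc : ∀ i, c i ∈ Set.Icc (-1:ℝ) 1)
    (PS : Measure (Fin n → Bool)) (hPS : PS = Measure.pi fun _ => coin)
    (loss : W → Z → ℝ) (hloss : ∀ w z, loss w z ∈ Set.Icc (0:ℝ) 1)
    (w : W) (zt : Fin n × Bool → Z) :
    (∫ s, Real.exp (((n - 1 : ℝ)/2) * (((∑ i, (if s i then 1 else -1) * c i) / n) ^ 2)) ∂PS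
      ≤ Real.sqrt n) ∧
    (∫ s, Real.exp (((n - 1 : ℝ)/2) *
        (((∑ i, loss w (zt (i, !s i))) / n - (∑ i, loss w (zt (i, s i))) / n) ^ 2)) ∂PS
      ≤ Real.sqrt n) := by
  subst hPS
  constructor
  · exact key_s3 n hn c (fun i => abs_le.mpr ⟨(hc i).1, (hc i).2⟩)
  · set c' : Fin n → ℝ := fun i => loss w (zt (i, false)) - loss w (zt (i, true)) with hc'
    have hc'b : ∀ i, |c' i| ≤ 1 := by
      intro i
      have h1 := hloss w (zt (i, false))
      have h2 := hloss w (zt (i, true))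
      rw [hc']
      simp only
      rw [abs_le]
      exact ⟨by linarith [h1.1, h2.2], by linarith [h1.2, h2.1]⟩
    have heq : ∀ s : Fin n → Bool,
        (∑ i, loss w (zt (i, !s i))) / n - (∑ i, loss w (zt (i, s i))) / n
        = (∑ i, (if s i then 1 else -1) * c' i) / n := by
      intro s
      rw [div_sub_div_same, ← Finset.sum_sub_distrib]
      congr 1
      refine Finset.sum_congr rfl fun i _ => ?_
      cases h : s i <;> simp [hc', h]
    calc ∫ s, Real.exp (((n - 1 : ℝ)/2) *
          (((∑ i, loss w (zt (i, !s i))) / n - (∑ i, loss w (zt (i, s i))) / n) ^ 2))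
          ∂(Measure.pi fun _ => coin)
        = ∫ s, Real.exp (((n - 1 : ℝ)/2) * (((∑ i, (if s i then 1 else -1) * c' i) / n) ^ 2))
          ∂(Measure.pi fun _ => coin) := by
          congr 1; funext s; rw [heq s]
      _ ≤ Real.sqrt n := key_s3 n hn c' hc'b
end
end

section
/- (Corollary 1, fast-rate single-draw bound) In the random-subset setting, let λ, γ > 0 satisfy λ(1−γ) + (e^λ − 1 − λ)(1 + γ²) ≤ 0, let Q_{W|Z̃} be a conditional prior whose induced joint measure Q_{W|Z̃}P_{Z̃}P_S is mutually absolutely continuous with P_{WZ̃S}, and let δ ∈ (0,1). Then with probability at least 1 − δ over (W, Z̃, S) ~ P_{WZ̃S}: L_{Z(S̄)}(W) ≤ γ·L_{Z(S)}(W) + (ı(W,S|Z̃) + log(1/δ))/(λn), where ı(W,S|Z̃) = log(dP_{WZ̃S}/d(Q_{W|Z̃}P_{Z̃}P_S)). -/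
open MeasureTheory ProbabilityTheory Real

noncomputable section

/- ### Auxiliary analytic lemmas -/

lemma exp_quad_neg {x : ℝ} (hx : x ≤ 0) : Real.exp x ≤ 1 + x + x ^ 2 / 2 := by
  have hder : ∀ y : ℝ, HasDerivAt (fun t => 1 + t + t ^ 2 / 2 - Real.exp t)
      (1 + y - Real.exp y) y := by
    intro y
    have h1 : HasDerivAt (fun t : ℝ => 1 + t + t ^ 2 / 2) (1 + y) y := by
      have h := ((hasDerivAt_id y).const_add 1).add ((hasDerivAt_pow 2 y).div_const 2)
      exact h.congr_deriv (by push_cast; ring)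
    exact h1.sub (Real.hasDerivAt_exp y)
  have hanti : AntitoneOn (fun t => 1 + t + t ^ 2 / 2 - Real.exp t) (Set.Iic 0) := by
    refine antitoneOn_of_deriv_nonpos (convex_Iic 0) (Continuous.continuousOn (by continuity))
      (fun y _ => (hder y).differentiableAt.differentiableWithinAt) ?_
    intro y hy
    rw [(hder y).deriv]
    have := Real.add_one_le_exp y
    linarith
  have h := hanti (Set.mem_Iic.2 hx) Set.self_mem_Iic hx
  simp only [Real.exp_zero] at h
  nlinarith [h]

set_option maxHeartbeats 1000000 in
lemma exp_mono_quad {l x : ℝ} (hx : 0 ≤ x) (hxl : x ≤ l) :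
    (Real.exp x - 1 - x) * l ^ 2 ≤ (Real.exp l - 1 - l) * x ^ 2 := by
  have hsum : ∀ y : ℝ, Real.exp y = ∑' n : ℕ, y ^ n / n.factorial := by
    intro y
    rw [Real.exp_eq_exp_ℝ, NormedSpace.exp_eq_tsum_div]
  have hshift : ∀ y : ℝ, Real.exp y - 1 - y = ∑' n : ℕ, y ^ (n + 2) / (n + 2).factorial := by
    intro y
    have h := Summable.sum_add_tsum_nat_add (f := fun n : ℕ => y ^ n / n.factorial) 2
      (Real.summable_pow_div_factorial y)
    rw [hsum y, ← h]
    simp only [Finset.sum_range_succ, Finset.sum_range_zero, pow_zero, pow_one,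
      Nat.factorial_zero, Nat.factorial_one, Nat.cast_one, div_one]
    ring
  have hsx : Summable fun n : ℕ => x ^ (n + 2) / (n + 2).factorial :=
    (summable_nat_add_iff 2).2 (Real.summable_pow_div_factorial x)
  have hsl : Summable fun n : ℕ => l ^ (n + 2) / (n + 2).factorial :=
    (summable_nat_add_iff 2).2 (Real.summable_pow_div_factorial l)
  rw [hshift, hshift, ← tsum_mul_right, ← tsum_mul_right]
  refine Summable.tsum_le_tsum (fun n => ?_) (hsx.mul_right _) (hsl.mul_right _)
  have h1 : x ^ (n + 2) * l ^ 2 ≤ l ^ (n + 2) * x ^ 2 := by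
    have hxn : x ^ n ≤ l ^ n := pow_le_pow_left₀ hx hxl n
    calc x ^ (n + 2) * l ^ 2 = x ^ n * (x ^ 2 * l ^ 2) := by ring
      _ ≤ l ^ n * (x ^ 2 * l ^ 2) :=
          mul_le_mul_of_nonneg_right hxn (mul_nonneg (sq_nonneg x) (sq_nonneg l))
      _ = l ^ (n + 2) * x ^ 2 := by ring
  have hfac : (0:ℝ) < (n + 2).factorial := by positivity
  calc x ^ (n + 2) / (n + 2).factorial * l ^ 2 = x ^ (n + 2) * l ^ 2 / (n + 2).factorial := by
        ring
    _ ≤ l ^ (n + 2) * x ^ 2 / (n + 2).factorial := by gcongr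
    _ = l ^ (n + 2) / (n + 2).factorial * x ^ 2 := by ring

lemma exp_quad_bound {l x : ℝ} (hl : 0 < l) (hx : x ≤ l) :
    Real.exp x ≤ 1 + x + (Real.exp l - 1 - l) / l ^ 2 * x ^ 2 := by
  have hl2 : (0:ℝ) < l ^ 2 := by positivity
  have hc : l ^ 2 / 2 ≤ Real.exp l - 1 - l := by
    have := Real.quadratic_le_exp_of_nonneg hl.le
    linarith
  rcases le_or_gt x 0 with h | h
  · have h1 := exp_quad_neg h
    have h2 : x ^ 2 / 2 ≤ (Real.exp l - 1 - l) / l ^ 2 * x ^ 2 := by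
      rw [div_mul_eq_mul_div, le_div_iff₀ hl2]
      nlinarith [mul_le_mul_of_nonneg_right hc (sq_nonneg x)]
    linarith
  · have h1 := exp_mono_quad h.le hx
    have : Real.exp x - 1 - x ≤ (Real.exp l - 1 - l) / l ^ 2 * x ^ 2 := by
      rw [div_mul_eq_mul_div, le_div_iff₀ hl2]
      linarith
    linarith

lemma key_half_bound {lam gam : ℝ} (hlam : 0 < lam) (hgam : 0 < gam)
    (hcond : lam * (1 - gam) + (Real.exp lam - 1 - lam) * (1 + gam ^ 2) ≤ 0)
    {a b : ℝ} (ha : a ∈ Set.Icc (0:ℝ) 1) (hb : b ∈ Set.Icc (0:ℝ) 1) :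
    Real.exp (lam * (a - gam * b)) + Real.exp (lam * (b - gam * a)) ≤ 2 := by
  obtain ⟨ha0, ha1⟩ := ha
  obtain ⟨hb0, hb1⟩ := hb
  set c := Real.exp lam - 1 - lam with hc
  have hcnn : 0 ≤ c := by
    have := Real.add_one_le_exp lam
    simp only [hc]; linarith
  have hx1 : lam * (a - gam * b) ≤ lam := by
    nlinarith [mul_nonneg hlam.le (mul_nonneg hgam.le hb0),
      mul_le_mul_of_nonneg_left ha1 hlam.le]
  have hx2 : lam * (b - gam * a) ≤ lam := by
    nlinarith [mul_nonneg hlam.le (mul_nonneg hgam.le ha0),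
      mul_le_mul_of_nonneg_left hb1 hlam.le]
  have h1 := exp_quad_bound hlam hx1
  have h2 := exp_quad_bound hlam hx2
  have hl2 : (0:ℝ) < lam ^ 2 := by positivity
  have hq1 : c / lam ^ 2 * (lam * (a - gam * b)) ^ 2 = c * (a - gam * b) ^ 2 := by
    field_simp
  have hq2 : c / lam ^ 2 * (lam * (b - gam * a)) ^ 2 = c * (b - gam * a) ^ 2 := by
    field_simp
  rw [hq1] at h1
  rw [hq2] at h2
  have hsq : (a - gam * b) ^ 2 + (b - gam * a) ^ 2 ≤ (1 + gam ^ 2) * (a + b) := by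
    nlinarith [mul_nonneg (mul_nonneg hgam.le ha0) hb0, mul_nonneg ha0 (sub_nonneg.2 ha1),
      mul_nonneg hb0 (sub_nonneg.2 hb1), sq_nonneg gam]
  have hab : 0 ≤ a + b := by linarith
  nlinarith [mul_le_mul_of_nonneg_left hsq hcnn, mul_nonneg hab
    (neg_nonneg.2 hcond), mul_le_mul_of_nonneg_right hcond hab]

/- ### Auxiliary measure-theoretic lemma -/

lemma bind_eq_compProd {α β : Type*} [MeasurableSpace α] [MeasurableSpace β]
    (μ : Measure α) [SFinite μ] (κ : Kernel α β) [IsSFiniteKernel κ] :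
    (μ.bind fun p => (κ p).map fun w => (p, w)) = μ.compProd κ := by
  have hfun : (fun p => (κ p).map fun w => (p, w)) = fun p => (Kernel.id ×ₖ κ) p := by
    funext p
    rw [Kernel.prod_apply, Kernel.id_apply, Measure.dirac_prod]
  ext s hs
  rw [Measure.bind_apply hs (by rw [hfun]; exact (Kernel.id ×ₖ κ).measurable.aemeasurable),
    Measure.compProd_apply hs]
  refine lintegral_congr fun a => ?_
  rw [Measure.map_apply measurable_prodMk_left hs]

/-- Corollary 1: fast-rate single-draw bound on the test loss. -/
theorem stmt8
    {Z W : Type*} [MeasurableSpace Z] [MeasurableSpace W]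
    (n : ℕ) (hn : 0 < n)
    (PZ : Measure Z) [IsProbabilityMeasure PZ]
    (loss : W → Z → ℝ) (hlossmeas : Measurable (Function.uncurry loss))
    (hloss : ∀ w z, loss w z ∈ Set.Icc (0:ℝ) 1)
    (K : Kernel ((Fin n × Bool → Z) × (Fin n → Bool)) W) [IsMarkovKernel K]
    (hK : ∀ zt s zt' s', (∀ i, zt (i, s i) = zt' (i, s' i)) → K (zt, s) = K (zt', s'))
    (PZt : Measure ((Fin n × Bool) → Z)) (hPZt : PZt = Measure.pi fun _ => PZ)
    (PS : Measure (Fin n → Bool)) (hPS : PS = Measure.pi fun _ => coin)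
    (PWZS : Measure (((Fin n × Bool → Z) × (Fin n → Bool)) × W))
    (hPWZS : PWZS = (PZt.prod PS).bind fun p => (K p).map fun w => (p, w))
    (lam gam : ℝ) (hlam : 0 < lam) (hgam : 0 < gam)
    (hcond : lam * (1 - gam) + (Real.exp lam - 1 - lam) * (1 + gam ^ 2) ≤ 0)
    (Q : Kernel (Fin n × Bool → Z) W) [IsMarkovKernel Q]
    (QJ : Measure (((Fin n × Bool → Z) × (Fin n → Bool)) × W))
    (hQJ : QJ = (PZt.prod PS).bind fun p => (Q p.1).map fun w => (p, w))
    (hac1 : PWZS ≪ QJ) (hac2 : QJ ≪ PWZS)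
    (δ : ℝ) (hδ0 : 0 < δ) (hδ1 : δ < 1) :
    ENNReal.ofReal (1 - δ) ≤ PWZS {x |
      testLoss n loss x ≤ gam * trainLoss n loss x
        + (Real.log ((PWZS.rnDeriv QJ x).toReal) + Real.log (1/δ)) / (lam * n)} := by
  classical
  haveI : IsProbabilityMeasure PZt := by rw [hPZt]; infer_instance
  haveI : IsProbabilityMeasure PS := by rw [hPS]; infer_instance
  set μc : Measure ((Fin n × Bool → Z) × (Fin n → Bool)) := PZt.prod PS with hμc
  set κQ : Kernel ((Fin n × Bool → Z) × (Fin n → Bool)) W :=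
    Q.comap Prod.fst measurable_fst with hκQ
  have hPWZS' : PWZS = μc.compProd K := by rw [hPWZS, bind_eq_compProd]
  have hQJ' : QJ = μc.compProd κQ := by
    rw [hQJ]
    exact bind_eq_compProd μc κQ
  haveI : IsProbabilityMeasure PWZS := by rw [hPWZS']; infer_instance
  haveI : IsProbabilityMeasure QJ := by rw [hQJ']; infer_instance
  have hnR : (0:ℝ) < n := Nat.cast_pos.2 hn
  -- the exponent function
  set g : (((Fin n × Bool → Z) × (Fin n → Bool)) × W) → ℝ :=
    fun x => ∑ i, lam * (loss x.2 (x.1.1 (i, !x.1.2 i)) - gam * loss x.2 (x.1.1 (i, x.1.2 i)))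
    with hgdef
  -- measurability of evaluation maps
  have hev1 : ∀ i : Fin n,
      Measurable fun x : ((Fin n × Bool → Z) × (Fin n → Bool)) × W => x.1.1 (i, x.1.2 i) := by
    intro i
    have h0 : Measurable fun q : (Fin n × Bool → Z) × Bool => q.1 (i, q.2) :=
      measurable_from_prod_countable_left fun b => measurable_pi_apply (i, b)
    exact h0.comp ((measurable_fst.fst).prodMk ((measurable_pi_apply i).comp
      measurable_fst.snd))
  have hev2 : ∀ i : Fin n,
      Measurable fun x : ((Fin n × Bool → Z) × (Fin n → Bool)) × W => x.1.1 (i, !x.1.2 i) := by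
    intro i
    have h0 : Measurable fun q : (Fin n × Bool → Z) × Bool => q.1 (i, !q.2) :=
      measurable_from_prod_countable_left fun b => measurable_pi_apply (i, !b)
    exact h0.comp ((measurable_fst.fst).prodMk ((measurable_pi_apply i).comp
      measurable_fst.snd))
  have hlm1 : ∀ i : Fin n,
      Measurable fun x : ((Fin n × Bool → Z) × (Fin n → Bool)) × W =>
        loss x.2 (x.1.1 (i, x.1.2 i)) :=
    fun i => hlossmeas.comp (measurable_snd.prodMk (hev1 i))
  have hlm2 : ∀ i : Fin n,
      Measurable fun x : ((Fin n × Bool → Z) × (Fin n → Bool)) × W =>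
        loss x.2 (x.1.1 (i, !x.1.2 i)) :=
    fun i => hlossmeas.comp (measurable_snd.prodMk (hev2 i))
  have hgmeas : Measurable g := by
    refine Finset.measurable_sum _ fun i _ => ?_
    exact (((hlm2 i).sub ((hlm1 i).const_mul gam)).const_mul lam)
  have hgub : ∀ x, g x ≤ lam * n := by
    intro x
    have h : ∀ i ∈ Finset.univ,
        lam * (loss x.2 (x.1.1 (i, !x.1.2 i)) - gam * loss x.2 (x.1.1 (i, x.1.2 i))) ≤ lam := by
      intro i _
      obtain ⟨h10, h11⟩ := hloss x.2 (x.1.1 (i, !x.1.2 i))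
      obtain ⟨h20, h21⟩ := hloss x.2 (x.1.1 (i, x.1.2 i))
      nlinarith [mul_nonneg hlam.le (mul_nonneg hgam.le h20),
        mul_le_mul_of_nonneg_left h11 hlam.le]
    calc g x ≤ ∑ _i : Fin n, lam := Finset.sum_le_sum h
      _ = lam * n := by simp [Finset.sum_const, Finset.card_univ, mul_comm]
  have hexp_le : ∀ x, Real.exp (g x) ≤ Real.exp (lam * n) :=
    fun x => Real.exp_le_exp.2 (hgub x)
  have hexpmeas : Measurable fun x => Real.exp (g x) := Real.measurable_exp.comp hgmeas
  -- relation between g and the losses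
  have hkey : ∀ x, lam * n * (testLoss n loss x - gam * trainLoss n loss x) = g x := by
    intro x
    have hgx : g x = lam * ((∑ i, loss x.2 (x.1.1 (i, !x.1.2 i)))
        - gam * ∑ i, loss x.2 (x.1.1 (i, x.1.2 i))) := by
      rw [hgdef]
      simp only [mul_sub, Finset.sum_sub_distrib, Finset.mul_sum]
    rw [hgx, testLoss, trainLoss]
    field_simp
  have hiff : ∀ x (T : ℝ),
      (testLoss n loss x ≤ gam * trainLoss n loss x + T / (lam * n)) ↔ g x ≤ T := by
    intro x T
    have hln : (0:ℝ) < lam * n := mul_pos hlam hnR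
    rw [← hkey x]
    constructor
    · intro h
      calc lam * ↑n * (testLoss n loss x - gam * trainLoss n loss x)
          = (testLoss n loss x - gam * trainLoss n loss x) * (lam * n) := by ring
        _ ≤ T := (le_div_iff₀ hln).1 (by linarith)
    · intro h
      have h2 : (testLoss n loss x - gam * trainLoss n loss x) ≤ T / (lam * n) := by
        rw [le_div_iff₀ hln]
        calc (testLoss n loss x - gam * trainLoss n loss x) * (lam * n)
            = lam * ↑n * (testLoss n loss x - gam * trainLoss n loss x) := by ring
          _ ≤ T := h
      linarith
  -- integrability of exp ∘ g
  have hintQJ : Integrable (fun x => Real.exp (g x)) QJ :=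
    (integrable_const (Real.exp (lam * n))).mono' hexpmeas.aestronglyMeasurable
      (ae_of_all _ fun x => by
        rw [Real.norm_eq_abs, abs_of_pos (Real.exp_pos _)]; exact hexp_le x)
  -- the main exponential-moment bound
  have hEQJ : ∫ x, Real.exp (g x) ∂QJ ≤ 1 := by
    rw [hQJ']
    have hint : Integrable (fun x => Real.exp (g x)) (μc.compProd κQ) := by
      rw [← hQJ']; exact hintQJ
    rw [Measure.integral_compProd hint]
    set G : ((Fin n × Bool → Z) × (Fin n → Bool)) → ℝ :=
      fun p => ∫ w, Real.exp (g (p, w)) ∂(Q p.1) with hGdef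
    have hκQG : (fun p : (Fin n × Bool → Z) × (Fin n → Bool) =>
        ∫ w, Real.exp (g (p, w)) ∂(κQ p)) = G := by
      funext p
      rw [hGdef, hκQ, Kernel.comap_apply]
    rw [hκQG]
    have hGsm : StronglyMeasurable G := by
      have h := MeasureTheory.StronglyMeasurable.integral_kernel_prod_right' (κ := κQ)
        (hexpmeas.stronglyMeasurable)
      rwa [hκQG] at h
    have hGnn : ∀ p, 0 ≤ G p := fun p => integral_nonneg fun w => (Real.exp_pos _).le
    have hGbd : ∀ p, G p ≤ Real.exp (lam * n) := by
      intro p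
      calc G p ≤ ∫ _w, Real.exp (lam * n) ∂(Q p.1) :=
            integral_mono_of_nonneg (ae_of_all _ fun w => (Real.exp_pos _).le)
              (integrable_const _) (ae_of_all _ fun w => hexp_le _)
        _ = Real.exp (lam * n) := by simp
    have hGint : Integrable G μc :=
      (integrable_const (Real.exp (lam * n))).mono' hGsm.aestronglyMeasurable
        (ae_of_all _ fun p => by
          rw [Real.norm_eq_abs, abs_of_nonneg (hGnn p)]; exact hGbd p)
    rw [hμc, integral_prod _ hGint]
    -- bound the inner integral over S
    have hinner : ∀ zt, ∫ s, G (zt, s) ∂PS ≤ 1 := by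
      intro zt
      have hPSs : ∀ s : Fin n → Bool, (PS {s}).toReal = (2⁻¹ : ℝ) ^ n := by
        intro s
        have hcoin : ∀ b : Bool, coin {b} = 2⁻¹ := by
          intro b
          rw [coin, PMF.toMeasure_apply_singleton _ _ (measurableSet_singleton b),
            PMF.uniformOfFintype_apply]
          simp
        rw [hPS, ← Set.univ_pi_singleton, Measure.pi_pi]
        simp [hcoin]
      have hwint : ∀ s : Fin n → Bool,
          Integrable (fun w => Real.exp (g ((zt, s), w))) (Q zt) :=
        fun s => (integrable_const (Real.exp (lam * n))).mono'
          ((hexpmeas.comp measurable_prodMk_left).aestronglyMeasurable)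
          (ae_of_all _ fun w => by
            rw [Real.norm_eq_abs, abs_of_pos (Real.exp_pos _)]; exact hexp_le _)
      rw [integral_fintype (Integrable.of_finite)]; simp only [Measure.real]
      have hstep : ∀ s : Fin n → Bool, (PS {s}).toReal • G (zt, s)
          = ∫ w, ((2⁻¹:ℝ) ^ n * Real.exp (g ((zt, s), w))) ∂(Q zt) := by
        intro s
        rw [hPSs s, hGdef]
        simp only [smul_eq_mul]
        rw [integral_const_mul]
      rw [Finset.sum_congr rfl fun s _ => hstep s, ← integral_finset_sum _
        (fun s _ => (hwint s).const_mul _)]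
      have hpt : ∀ w, ∑ s : Fin n → Bool, (2⁻¹:ℝ) ^ n * Real.exp (g ((zt, s), w)) ≤ 1 := by
        intro w
        have hfactor : ∀ s : Fin n → Bool, (2⁻¹:ℝ) ^ n * Real.exp (g ((zt, s), w))
            = ∏ i : Fin n, (2⁻¹ * Real.exp (lam * (loss w (zt (i, !s i))
                - gam * loss w (zt (i, s i))))) := by
          intro s
          rw [hgdef]
          simp only
          rw [Real.exp_sum, Finset.prod_mul_distrib, Finset.prod_const, Finset.card_univ,
            Fintype.card_fin]
        rw [Finset.sum_congr rfl fun s _ => hfactor s]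
        have hswap := Finset.sum_prod_piFinset (Finset.univ : Finset Bool)
          (fun (i : Fin n) (b : Bool) => 2⁻¹ * Real.exp (lam * (loss w (zt (i, !b))
            - gam * loss w (zt (i, b)))))
        rw [Fintype.piFinset_univ] at hswap
        rw [hswap]
        refine Finset.prod_le_one (fun i _ => ?_) (fun i _ => ?_)
        · refine Finset.sum_nonneg fun b _ => ?_
          positivity
        · rw [Fintype.sum_bool]
          have hkb := key_half_bound hlam hgam hcond (hloss w (zt (i, false)))
            (hloss w (zt (i, true)))
          simp only [Bool.not_true, Bool.not_false]
          linarith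
      have hptn : ∀ w, 0 ≤ ∑ s : Fin n → Bool, (2⁻¹:ℝ) ^ n * Real.exp (g ((zt, s), w)) :=
        fun w => Finset.sum_nonneg fun s _ => by positivity
      calc ∫ w, (∑ s : Fin n → Bool, (2⁻¹:ℝ) ^ n * Real.exp (g ((zt, s), w))) ∂(Q zt)
          ≤ ∫ _w, (1:ℝ) ∂(Q zt) :=
            integral_mono_of_nonneg (ae_of_all _ hptn) (integrable_const 1)
              (ae_of_all _ hpt)
        _ = 1 := by simp
    have hinner0 : ∀ zt, 0 ≤ ∫ s, G (zt, s) ∂PS :=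
      fun zt => integral_nonneg fun s => hGnn _
    calc ∫ zt, (∫ s, G (zt, s) ∂PS) ∂PZt ≤ ∫ _zt, (1:ℝ) ∂PZt :=
          integral_mono_of_nonneg (ae_of_all _ hinner0) (integrable_const 1)
            (ae_of_all _ hinner)
      _ = 1 := by simp
  -- change of measure
  set f : (((Fin n × Bool → Z) × (Fin n → Bool)) × W) → ℝ :=
    fun x => Real.exp (g x) * (QJ.rnDeriv PWZS x).toReal with hfdef
  have hfint : Integrable f PWZS := by
    have h := (MeasureTheory.integrable_rnDeriv_smul_iff hac2
      (f := fun x => Real.exp (g x))).2 hintQJ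
    refine h.congr (ae_of_all _ fun x => ?_)
    rw [hfdef]
    simp [smul_eq_mul, mul_comm]
  have hfbound : ∫ x, f x ∂PWZS ≤ 1 := by
    have h := MeasureTheory.integral_rnDeriv_smul hac2 (f := fun x => Real.exp (g x))
    calc ∫ x, f x ∂PWZS = ∫ x, (QJ.rnDeriv PWZS x).toReal • Real.exp (g x) ∂PWZS := by
          refine integral_congr_ae (ae_of_all _ fun x => ?_)
          rw [hfdef]; simp [smul_eq_mul, mul_comm]
      _ = ∫ x, Real.exp (g x) ∂QJ := h
      _ ≤ 1 := hEQJ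
  -- Markov's inequality
  have hf0 : 0 ≤ᵐ[PWZS] f :=
    ae_of_all _ fun x => mul_nonneg (Real.exp_pos _).le ENNReal.toReal_nonneg
  have hmarkov := mul_meas_ge_le_integral_of_nonneg hf0 hfint (1/δ)
  set B : Set ((((Fin n × Bool → Z) × (Fin n → Bool)) × W)) := {x | 1/δ ≤ f x} with hBdef
  have hBbound : PWZS B ≤ ENNReal.ofReal δ := by
    have h1 : (1/δ) * (PWZS B).toReal ≤ 1 := le_trans hmarkov hfbound
    have h2 : (PWZS B).toReal ≤ δ := by
      have h4 := mul_le_mul_of_nonneg_left h1 hδ0.le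
      rw [mul_one, ← mul_assoc, mul_one_div, div_self hδ0.ne', one_mul] at h4
      exact h4
    exact (ENNReal.le_ofReal_iff_toReal_le (measure_ne_top _ _) hδ0.le).2 h2
  -- the bad event is a.e. contained in B
  set E : Set ((((Fin n × Bool → Z) × (Fin n → Bool)) × W)) := {x |
      testLoss n loss x ≤ gam * trainLoss n loss x
        + (Real.log ((PWZS.rnDeriv QJ x).toReal) + Real.log (1/δ)) / (lam * n)} with hEdef
  have hae1 : ∀ᵐ x ∂PWZS, PWZS.rnDeriv QJ x < ⊤ :=
    (Measure.rnDeriv_lt_top PWZS QJ).filter_mono hac1.ae_le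
  have hae2 : ∀ᵐ x ∂PWZS, 0 < PWZS.rnDeriv QJ x := Measure.rnDeriv_pos hac1
  have hae3 : (PWZS.rnDeriv QJ)⁻¹ =ᵐ[PWZS] QJ.rnDeriv PWZS := Measure.inv_rnDeriv hac1
  have hsub : Eᶜ ≤ᵐ[PWZS] B := by
    filter_upwards [hae1, hae2, hae3] with x h1 h2 h3 hx
    have hR : 0 < (PWZS.rnDeriv QJ x).toReal := ENNReal.toReal_pos h2.ne' h1.ne
    have hxlt : Real.log ((PWZS.rnDeriv QJ x).toReal) + Real.log (1/δ) < g x := by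
      by_contra hcon
      push_neg at hcon
      exact hx ((hiff x _).2 hcon)
    have hfx : f x = Real.exp (g x) / (PWZS.rnDeriv QJ x).toReal := by
      rw [hfdef]
      simp only
      rw [← h3]
      simp [ENNReal.toReal_inv, div_eq_mul_inv]
    have hexpgt : (PWZS.rnDeriv QJ x).toReal * (1/δ) < Real.exp (g x) := by
      have := Real.exp_lt_exp.2 hxlt
      rwa [Real.exp_add, Real.exp_log hR, Real.exp_log (by positivity : (0:ℝ) < 1/δ)] at this
    have : 1/δ < f x := by
      rw [hfx, lt_div_iff₀ hR]
      calc 1/δ * (PWZS.rnDeriv QJ x).toReal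
          = (PWZS.rnDeriv QJ x).toReal * (1/δ) := by ring
        _ < Real.exp (g x) := hexpgt
    exact this.le
  have hEc : PWZS Eᶜ ≤ ENNReal.ofReal δ := le_trans (measure_mono_ae hsub) hBbound
  -- measurability of the event
  have hEmeas : MeasurableSet E := by
    have htest : Measurable (testLoss n loss :
        (((Fin n × Bool → Z) × (Fin n → Bool)) × W) → ℝ) := by
      unfold testLoss
      exact (Finset.measurable_sum _ fun i _ => hlm2 i).div_const _
    have htrain : Measurable (trainLoss n loss :
        (((Fin n × Bool → Z) × (Fin n → Bool)) × W) → ℝ) := by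
      unfold trainLoss
      exact (Finset.measurable_sum _ fun i _ => hlm1 i).div_const _
    have hrn : Measurable fun x => Real.log ((PWZS.rnDeriv QJ x).toReal) :=
      Real.measurable_log.comp (ENNReal.measurable_toReal.comp
        (Measure.measurable_rnDeriv PWZS QJ))
    exact measurableSet_le htest ((htrain.const_mul gam).add
      (((hrn.add measurable_const)).div_const _))
  -- conclude
  have hcompl : PWZS Eᶜ = 1 - PWZS E := prob_compl_eq_one_sub hEmeas
  rw [hcompl] at hEc
  have h4 : (1:ENNReal) ≤ ENNReal.ofReal δ + PWZS E := tsub_le_iff_right.1 hEc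
  have h5 : ENNReal.ofReal (1 - δ) + ENNReal.ofReal δ = 1 := by
    rw [← ENNReal.ofReal_add (by linarith) hδ0.le]
    norm_num
  have h6 : ENNReal.ofReal (1 - δ) + ENNReal.ofReal δ ≤ ENNReal.ofReal δ + PWZS E := by
    rw [h5]; exact h4
  rw [add_comm (ENNReal.ofReal (1 - δ))] at h6
  exact (ENNReal.add_le_add_iff_left ENNReal.ofReal_ne_top).1 h6
end
end

section
/- (Corollary 3, interpolating average bound) In the random-subset setting, assume L_{Z(S)}(W) = 0 almost surely under P_{WZ̃S}. Then the average population loss satisfies E_{P_{WZ̃S}}[L_{P_Z}(W)] ≤ I(W; S | Z̃)/(n·log 2), where I(W; S | Z̃) is the conditional mutual information between W and S given Z̃ (in nats). -/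
open MeasureTheory ProbabilityTheory Real
open scoped ENNReal NNReal

noncomputable section

section Aux

variable {α : Type*} [MeasurableSpace α]

lemma aux_integrable_of_bound (μ : Measure α) [IsFiniteMeasure μ] {f : α → ℝ}
    (hm : AEStronglyMeasurable f μ) (C : ℝ) (h : ∀ᵐ x ∂μ, |f x| ≤ C) :
    Integrable f μ :=
  Integrable.mono' (integrable_const C) hm (by simpa [Real.norm_eq_abs] using h)

lemma aux_bind_eq_compProd {β : Type*} [MeasurableSpace β]
    (μ : Measure α) [SFinite μ] (κ : Kernel α β) [IsSFiniteKernel κ] :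
    (μ.bind fun p => (κ p).map fun w => (p, w)) = μ ⊗ₘ κ := by
  have hmeas : Measurable fun p => ((κ p).map fun w => (p, w) : Measure (α × β)) := by
    refine Measure.measurable_of_measurable_coe _ fun s hs => ?_
    simp_rw [Measure.map_apply measurable_prodMk_left hs]
    exact Kernel.measurable_kernel_prodMk_left hs
  ext s hs
  rw [Measure.bind_apply hs hmeas.aemeasurable, Measure.compProd_apply hs]
  exact lintegral_congr fun p => Measure.map_apply measurable_prodMk_left hs

/-- Change-of-measure / Donsker-Varadhan style bound: if `∫ g dQ ≤ 1` for nonnegative `g`,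
then `∫ log g dP ≤ KL(P‖Q)` whenever `P ≤ c • Q`. -/
lemma aux_cm (P Q : Measure α) [IsProbabilityMeasure P] [IsProbabilityMeasure Q]
    (c : ℝ≥0∞) (hc : c ≠ ⊤) (hle : P ≤ c • Q)
    {g : α → ℝ} (hg : Measurable g) (hg0 : ∀ x, 0 ≤ g x)
    (hgQ : ∫⁻ x, ENNReal.ofReal (g x) ∂Q ≤ 1)
    (hgpos : ∀ᵐ x ∂P, 0 < g x)
    (hgint : Integrable (fun x => Real.log (g x)) P) :
    ∫ x, Real.log (g x) ∂P ≤ klDiv' P Q := by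
  have hac : P ≪ Q := Measure.absolutelyContinuous_of_le_smul hle
  set ρ : α → ℝ≥0∞ := P.rnDeriv Q with hρdef
  have hρm : Measurable ρ := Measure.measurable_rnDeriv P Q
  have hρleQ : ∀ᵐ x ∂Q, ρ x ≤ c := by
    refine ae_le_of_forall_setLIntegral_le_of_sigmaFinite (g := fun _ => c) hρm
      fun s hs _ => ?_
    refine (Measure.setLIntegral_rnDeriv_le s).trans ?_
    rw [setLIntegral_const]
    calc P s ≤ (c • Q) s := Measure.le_iff'.1 hle s
    _ = c * Q s := rfl
  have hρfinQ : ∀ᵐ x ∂Q, ρ x < ⊤ := Measure.rnDeriv_lt_top P Q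
  have hρleP : ∀ᵐ x ∂P, ρ x ≤ c := hac.ae_le hρleQ
  have hρfinP : ∀ᵐ x ∂P, ρ x < ⊤ := hac.ae_le hρfinQ
  have hρpos : ∀ᵐ x ∂P, 0 < ρ x := Measure.rnDeriv_pos hac
  have hPd : Q.withDensity ρ = P := Measure.withDensity_rnDeriv_eq P Q hac
  -- integrability of `log ρ` under `P`
  have hlogint : Integrable (fun x => Real.log (ρ x).toReal) P := by
    rw [← hPd, integrable_withDensity_iff hρm hρfinQ]
    set B : ℝ := max 1 c.toReal with hB
    have hB1 : (1:ℝ) ≤ B := le_max_left _ _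
    refine aux_integrable_of_bound _ ?_ (B * |Real.log B| + 1) ?_
    · exact ((hρm.ennreal_toReal.log).mul hρm.ennreal_toReal).aestronglyMeasurable
    · filter_upwards [hρleQ, hρfinQ] with x h1 h2
      set t : ℝ := (ρ x).toReal with ht
      have ht0 : 0 ≤ t := ENNReal.toReal_nonneg
      have htB : t ≤ B := le_trans (ENNReal.toReal_mono hc h1) (le_max_right _ _)
      have hBmul : 0 ≤ B * |Real.log B| := mul_nonneg (by linarith) (abs_nonneg _)
      rcases le_or_gt t 1 with h | h
      · rcases eq_or_lt_of_le ht0 with h0 | h0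
        · rw [← h0]
          simp only [Real.log_zero, zero_mul, mul_zero, abs_zero]
          linarith
        · have hlog1 := (Real.abs_log_mul_self_lt t h0 h).le
          linarith
      · have hlt : 0 ≤ Real.log t := Real.log_nonneg h.le
        have habs : |Real.log t * t| = Real.log t * t := abs_of_nonneg (by positivity)
        have h1' : Real.log t ≤ |Real.log B| :=
          le_trans (Real.log_le_log (by linarith) htB) (le_abs_self _)
        have h2' : Real.log t * t ≤ |Real.log B| * B :=
          mul_le_mul h1' htB (by linarith) (abs_nonneg _)
        rw [habs]
        nlinarith
  have hdiv_meas : Measurable fun x => g x / (ρ x).toReal :=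
    hg.div hρm.ennreal_toReal
  have hdiv0 : ∀ x, 0 ≤ g x / (ρ x).toReal :=
    fun x => div_nonneg (hg0 x) ENNReal.toReal_nonneg
  have hJ : ∫⁻ x, ENNReal.ofReal (g x / (ρ x).toReal) ∂P ≤ 1 := by
    conv_lhs => rw [← hPd]
    rw [lintegral_withDensity_eq_lintegral_mul _ hρm hdiv_meas.ennreal_ofReal]
    refine le_trans (lintegral_mono_ae ?_) hgQ
    filter_upwards [hρfinQ] with x hfin
    by_cases h0 : ρ x = 0
    · simp [h0]
    · have hpos : 0 < (ρ x).toReal := ENNReal.toReal_pos h0 hfin.ne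
      have heq : ENNReal.ofReal (g x / (ρ x).toReal)
          = ENNReal.ofReal (g x) / ρ x := by
        rw [ENNReal.ofReal_div_of_pos hpos, ENNReal.ofReal_toReal hfin.ne]
      simp only [Pi.mul_apply, heq]
      rw [mul_comm, ENNReal.div_mul_cancel h0 hfin.ne]
  have hdivint : Integrable (fun x => g x / (ρ x).toReal) P := by
    refine ⟨hdiv_meas.aestronglyMeasurable, ?_⟩
    rw [hasFiniteIntegral_iff_ofReal (ae_of_all _ hdiv0)]
    exact lt_of_le_of_lt hJ ENNReal.one_lt_top
  have hdivval : ∫ x, g x / (ρ x).toReal ∂P ≤ 1 := by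
    rw [integral_eq_lintegral_of_nonneg_ae (ae_of_all _ hdiv0)
      hdiv_meas.aestronglyMeasurable]
    simpa using ENNReal.toReal_mono ENNReal.one_ne_top hJ
  have hptwise : ∀ᵐ x ∂P, Real.log (g x) - Real.log (ρ x).toReal
      ≤ g x / (ρ x).toReal - 1 := by
    filter_upwards [hgpos, hρpos, hρfinP] with x h1 h2 h3
    have hr : 0 < (ρ x).toReal := ENNReal.toReal_pos h2.ne' h3.ne
    rw [← Real.log_div h1.ne' hr.ne']
    exact Real.log_le_sub_one_of_pos (div_pos h1 hr)
  have hmono := integral_mono_ae (hgint.sub hlogint)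
    (hdivint.sub (integrable_const 1)) hptwise
  simp only [Pi.sub_apply] at hmono
  rw [integral_sub hgint hlogint, integral_sub hdivint (integrable_const 1)] at hmono
  have hconst : ∫ _x, (1:ℝ) ∂P = 1 := by simp
  rw [hconst] at hmono
  have hkl : klDiv' P Q = ∫ x, Real.log (ρ x).toReal ∂P := rfl
  rw [hkl]
  linarith

lemma aux_pi_map_eval {ι : Type*} [Fintype ι] {Z : Type*} [MeasurableSpace Z]
    (PZ : Measure Z) [IsProbabilityMeasure PZ] (i : ι) :
    (Measure.pi fun _ : ι => PZ).map (fun v => v i) = PZ := by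
  classical
  ext t ht
  rw [Measure.map_apply (measurable_pi_apply i) ht]
  have hpre : (fun v : ι → Z => v i) ⁻¹' t
      = Set.pi Set.univ (Function.update (fun _ : ι => (Set.univ : Set Z)) i t) := by
    ext v
    simp only [Set.mem_preimage, Set.mem_pi, Set.mem_univ, true_implies]
    constructor
    · intro h j
      rcases eq_or_ne j i with rfl | hj
      · simpa using h
      · simp [Function.update_apply, hj]
    · intro h
      simpa using h i
  rw [hpre, Measure.pi_pi]
  rw [Fintype.prod_eq_single i (fun j hj => by simp [Function.update_apply, hj])]
  simp

def ghostMap {n : ℕ} {Z : Type*} (s : Fin n → Bool) (p : (Fin n → Z) × (Fin n → Z)) :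
    Fin n × Bool → Z := fun q => if q.2 = s q.1 then p.1 q.1 else p.2 q.1

lemma ghostMap_measurable {n : ℕ} {Z : Type*} [MeasurableSpace Z] (s : Fin n → Bool) :
    Measurable (ghostMap (Z := Z) s) := by
  apply measurable_pi_lambda
  intro q
  unfold ghostMap
  by_cases h : q.2 = s q.1
  · simp only [h, if_true]
    exact (measurable_pi_apply _).comp measurable_fst
  · simp only [h, if_false]
    exact (measurable_pi_apply _).comp measurable_snd

lemma ghostMap_map {n : ℕ} {Z : Type*} [MeasurableSpace Z]
    (PZ : Measure Z) [IsProbabilityMeasure PZ] (s : Fin n → Bool) :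
    (((Measure.pi fun _ : Fin n => PZ).prod (Measure.pi fun _ : Fin n => PZ)).map
      (ghostMap s)) = Measure.pi fun _ : Fin n × Bool => PZ := by
  refine (Measure.pi_eq (μ := fun _ : Fin n × Bool => PZ) fun t ht => ?_).symm
  rw [Measure.map_apply (ghostMap_measurable s) (MeasurableSet.univ_pi fun q => ht q)]
  have hpre : ghostMap s ⁻¹' Set.pi Set.univ t =
      (Set.pi Set.univ fun i => t (i, s i)) ×ˢ (Set.pi Set.univ fun i => t (i, !s i)) := by
    ext p
    simp only [Set.mem_preimage, Set.mem_pi, Set.mem_univ, true_implies, Set.mem_prod]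
    constructor
    · intro h
      refine ⟨fun i => ?_, fun i => ?_⟩
      · have := h (i, s i)
        simpa [ghostMap] using this
      · have := h (i, !s i)
        simpa [ghostMap, if_neg (Bool.not_ne_self (s i))] using this
    · rintro ⟨h1, h2⟩ ⟨i, b⟩
      by_cases hb : b = s i
      · simp only [ghostMap, hb, if_true]
        simpa [hb] using h1 i
      · have hb' : b = !s i := by
          cases b <;> cases hsi : s i <;> simp_all
        simp only [ghostMap, if_neg hb]
        rw [hb']
        exact h2 i
  rw [hpre, Measure.prod_prod, Measure.pi_pi, Measure.pi_pi, ← Finset.prod_mul_distrib,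
    Fintype.prod_prod_type]
  refine Finset.prod_congr rfl fun i _ => ?_
  rw [Fintype.prod_bool]
  cases hsi : s i <;> simp [hsi, mul_comm]

end Aux

/-- Corollary 3: interpolating bound on the average population loss via
the conditional mutual information `I(W; S | Z̃)`. -/
theorem stmt11
    {Z W : Type*} [MeasurableSpace Z] [MeasurableSpace W]
    (n : ℕ) (hn : 0 < n)
    (PZ : Measure Z) [IsProbabilityMeasure PZ]
    (loss : W → Z → ℝ) (hlossmeas : Measurable (Function.uncurry loss))
    (hloss : ∀ w z, loss w z ∈ Set.Icc (0:ℝ) 1)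
    (K : Kernel ((Fin n × Bool → Z) × (Fin n → Bool)) W) [IsMarkovKernel K]
    (hK : ∀ zt s zt' s', (∀ i, zt (i, s i) = zt' (i, s' i)) → K (zt, s) = K (zt', s'))
    (PZt : Measure ((Fin n × Bool) → Z)) (hPZt : PZt = Measure.pi fun _ => PZ)
    (PS : Measure (Fin n → Bool)) (hPS : PS = Measure.pi fun _ => coin)
    (PWZS : Measure (((Fin n × Bool → Z) × (Fin n → Bool)) × W))
    (hPWZS : PWZS = (PZt.prod PS).bind fun p => (K p).map fun w => (p, w))
    (M : Kernel (Fin n × Bool → Z) W) [IsMarkovKernel M]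
    (hM : ∀ z, M z = PS.bind fun s => K (z, s))
    (MJ : Measure (((Fin n × Bool → Z) × (Fin n → Bool)) × W))
    (hMJ : MJ = (PZt.prod PS).bind fun p => (M p.1).map fun w => (p, w))
    (hinterp : ∀ᵐ x ∂PWZS, trainLoss n loss x = 0)
:
    ∫ x, popLoss PZ loss x.2 ∂PWZS ≤ klDiv' PWZS MJ / (n * Real.log 2) := by
  classical
  have hnR : (0:ℝ) < n := by exact_mod_cast hn
  have hl2 : (0:ℝ) < Real.log 2 := Real.log_pos (by norm_num)
  have hZ : Nonempty Z := by
    by_contra h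
    rw [not_nonempty_iff] at h
    have h1 := measure_univ (μ := PZ)
    rw [Set.univ_eq_empty_iff.2 h] at h1
    simp at h1
  obtain ⟨z0⟩ := hZ
  subst hPZt hPS hPWZS hMJ
  set PZt : Measure ((Fin n × Bool) → Z) := Measure.pi fun _ => PZ with hPZt
  set PS : Measure (Fin n → Bool) := Measure.pi fun _ => coin with hPS
  set κQ : Kernel ((Fin n × Bool → Z) × (Fin n → Bool)) W :=
    M.comap Prod.fst measurable_fst with hκQ
  have hκQa : ∀ p : (Fin n × Bool → Z) × (Fin n → Bool), κQ p = M p.1 := fun p => rfl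
  have hPc : ((PZt.prod PS).bind fun p => (K p).map fun w => (p, w)) = (PZt.prod PS) ⊗ₘ K :=
    aux_bind_eq_compProd _ _
  have hQc : ((PZt.prod PS).bind fun p => (M p.1).map fun w => (p, w))
      = (PZt.prod PS) ⊗ₘ κQ := by
    rw [← aux_bind_eq_compProd]
    rfl
  rw [hPc] at hinterp ⊢
  rw [hQc]
  set P : Measure (((Fin n × Bool → Z) × (Fin n → Bool)) × W) := (PZt.prod PS) ⊗ₘ K with hPdef
  set Q : Measure (((Fin n × Bool → Z) × (Fin n → Bool)) × W) := (PZt.prod PS) ⊗ₘ κQ with hQdef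
  -- measurability toolkit
  have hev : ∀ (i : Fin n) (φ : Bool → Bool),
      Measurable fun x : ((Fin n × Bool → Z) × (Fin n → Bool)) × W =>
        loss x.2 (x.1.1 (i, φ (x.1.2 i))) := by
    intro i φ
    have hsv : Measurable fun x : ((Fin n × Bool → Z) × (Fin n → Bool)) × W => x.1.2 i :=
      (measurable_pi_apply i).comp (measurable_fst.snd)
    have hzv : ∀ c : Bool,
        Measurable fun x : ((Fin n × Bool → Z) × (Fin n → Bool)) × W => x.1.1 (i, c) :=
      fun c => (measurable_pi_apply (i, c)).comp measurable_fst.fst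
    have heq : (fun x : ((Fin n × Bool → Z) × (Fin n → Bool)) × W => x.1.1 (i, φ (x.1.2 i)))
        = fun x => if x.1.2 i = true then x.1.1 (i, φ true) else x.1.1 (i, φ false) := by
      funext x; cases h : x.1.2 i <;> simp [h]
    have hm : Measurable fun x : ((Fin n × Bool → Z) × (Fin n → Bool)) × W =>
        x.1.1 (i, φ (x.1.2 i)) := by
      rw [heq]
      exact Measurable.ite (hsv (measurableSet_singleton true)) (hzv _) (hzv _)
    exact hlossmeas.comp (measurable_snd.prodMk hm)
  have hlw : ∀ w : W, Measurable fun z => loss w z :=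
    fun w => hlossmeas.comp (measurable_const.prodMk measurable_id)
  have htest : Measurable fun x : ((Fin n × Bool → Z) × (Fin n → Bool)) × W =>
      testLoss n loss x := by
    unfold testLoss
    exact (Finset.measurable_sum _ fun i _ => hev i (fun b => !b)).div_const _
  have hpopm : Measurable (popLoss PZ loss) :=
    hlossmeas.stronglyMeasurable.integral_prod_right'.measurable
  -- the auxiliary function g
  set g : ((Fin n × Bool → Z) × (Fin n → Bool)) × W → ℝ :=
    fun x => ∏ i, (Real.exp (Real.log 2 * loss x.2 (x.1.1 (i, !x.1.2 i))) *
      (if loss x.2 (x.1.1 (i, x.1.2 i)) = 0 then (1:ℝ) else 0)) with hgdef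
  have hgm : Measurable g := by
    refine Finset.measurable_prod _ fun i _ => Measurable.mul ?_ ?_
    · exact ((hev i (fun b => !b)).const_mul (Real.log 2)).exp
    · exact Measurable.ite ((hev i id) (measurableSet_singleton 0))
        measurable_const measurable_const
  have hg0 : ∀ x, 0 ≤ g x := by
    intro x
    refine Finset.prod_nonneg fun i _ => mul_nonneg (Real.exp_nonneg _) ?_
    split_ifs <;> norm_num
  -- a.e. identities under P
  have hae : ∀ᵐ x ∂P, Real.log (g x) = ((n : ℝ) * Real.log 2) * testLoss n loss x
      ∧ 0 < g x := by
    filter_upwards [hinterp] with x hx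
    have hsum : ∑ i, loss x.2 (x.1.1 (i, x.1.2 i)) = 0 := by
      simp only [trainLoss] at hx
      rcases div_eq_zero_iff.1 hx with h | h
      · exact h
      · exact absurd h (by positivity)
    have hzero : ∀ i : Fin n, loss x.2 (x.1.1 (i, x.1.2 i)) = 0 := by
      intro i
      exact (Finset.sum_eq_zero_iff_of_nonneg
        (fun i _ => (hloss _ _).1)).1 hsum i (Finset.mem_univ i)
    have hgx : g x = Real.exp (∑ i, Real.log 2 * loss x.2 (x.1.1 (i, !x.1.2 i))) := by
      rw [Real.exp_sum]
      refine Finset.prod_congr rfl fun i _ => ?_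
      rw [if_pos (hzero i), mul_one]
    constructor
    · rw [hgx, Real.log_exp, ← Finset.mul_sum]
      simp only [testLoss]
      field_simp
    · rw [hgx]; exact Real.exp_pos _
  -- integrability
  have htestInt : Integrable (fun x => testLoss n loss x) P := by
    refine aux_integrable_of_bound _ htest.aestronglyMeasurable 1 (ae_of_all _ fun x => ?_)
    simp only [testLoss]
    have h1 : 0 ≤ ∑ i, loss x.2 (x.1.1 (i, !x.1.2 i)) :=
      Finset.sum_nonneg fun i _ => (hloss _ _).1
    have h2 : ∑ i, loss x.2 (x.1.1 (i, !x.1.2 i)) ≤ (n:ℝ) := by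
      calc ∑ i, loss x.2 (x.1.1 (i, !x.1.2 i)) ≤ ∑ _i : Fin n, (1:ℝ) :=
        Finset.sum_le_sum fun i _ => (hloss _ _).2
      _ = n := by simp
    rw [abs_of_nonneg (div_nonneg h1 hnR.le), div_le_one hnR]
    exact h2
  have hlogInt : Integrable (fun x => Real.log (g x)) P := by
    refine Integrable.congr (htestInt.const_mul ((n : ℝ) * Real.log 2)) ?_
    filter_upwards [hae] with x hx
    exact hx.1.symm
  -- singleton mass of PS
  have hPSs : ∀ s : Fin n → Bool, PS {s} = ∏ _i : Fin n, (2:ℝ≥0∞)⁻¹ := by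
    intro s
    rw [hPS, ← Set.univ_pi_singleton s, Measure.pi_pi]
    refine Finset.prod_congr rfl fun i _ => ?_
    show coin {s i} = 2⁻¹
    rw [coin, PMF.toMeasure_apply_singleton _ _ (measurableSet_singleton _)]
    simp [PMF.uniformOfFintype_apply]
  -- P ≤ 2^n • Q
  have hKM : ∀ (p : (Fin n × Bool → Z) × (Fin n → Bool)) (t : Set W), MeasurableSet t →
      K p t ≤ (2:ℝ≥0∞)^n * M p.1 t := by
    intro p t ht
    have hMp : M p.1 t = ∫⁻ s, K (p.1, s) t ∂PS := by
      have hmb : Measurable fun s : Fin n → Bool => K (p.1, s) :=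
        (Kernel.measurable K).comp measurable_prodMk_left
      rw [hM p.1, Measure.bind_apply ht hmb.aemeasurable]
    have hsingle : K (p.1, p.2) t * PS {p.2} ≤ ∫⁻ s, K (p.1, s) t ∂PS := by
      have hms : Measurable fun s => K (p.1, s) t :=
        (Kernel.measurable_coe K ht).comp measurable_prodMk_left
      calc K (p.1, p.2) t * PS {p.2} = ∫⁻ s in {p.2}, K (p.1, s) t ∂PS :=
        (lintegral_singleton' hms p.2).symm
      _ ≤ ∫⁻ s, K (p.1, s) t ∂PS := setLIntegral_le_lintegral _ _
    have h2n0 : ((2:ℝ≥0∞)^n) ≠ 0 := by positivity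
    have h2nt : ((2:ℝ≥0∞)^n) ≠ ⊤ := by
      exact ENNReal.pow_ne_top (by norm_num)
    have hPSval : PS {p.2} = ((2:ℝ≥0∞)^n)⁻¹ := by
      rw [hPSs p.2, Finset.prod_const, ← ENNReal.inv_pow]
      simp
    rw [hMp]
    calc K p t = K (p.1, p.2) t * ((2:ℝ≥0∞)^n)⁻¹ * (2:ℝ≥0∞)^n := by
          rw [mul_assoc, ENNReal.inv_mul_cancel h2n0 h2nt, mul_one]
    _ ≤ (∫⁻ s, K (p.1, s) t ∂PS) * (2:ℝ≥0∞)^n := by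
          refine mul_le_mul_left ?_ _
          rw [← hPSval]
          exact hsingle
    _ = (2:ℝ≥0∞)^n * ∫⁻ s, K (p.1, s) t ∂PS := mul_comm _ _
  have hPle : P ≤ ((2:ℝ≥0∞)^n) • Q := by
    refine Measure.le_iff.2 fun A hA => ?_
    rw [hPdef, hQdef, Measure.compProd_apply hA, Measure.smul_apply, smul_eq_mul,
      Measure.compProd_apply hA,
      ← lintegral_const_mul _ (Kernel.measurable_kernel_prodMk_left hA)]
    refine lintegral_mono fun p => ?_
    rw [hκQa p]
    exact hKM p _ (measurable_prodMk_left hA)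
  -- ∫ g dQ ≤ 1
  have hexp2 : ∀ t : ℝ, t ≤ 1 → Real.exp (Real.log 2 * t) ≤ 2 := by
    intro t htle
    calc Real.exp (Real.log 2 * t) ≤ Real.exp (Real.log 2 * 1) :=
      Real.exp_le_exp.2 (mul_le_mul_of_nonneg_left htle hl2.le)
    _ = 2 := by rw [mul_one, Real.exp_log]; norm_num
  have hS : ∀ (zt : Fin n × Bool → Z) (w : W),
      ∫⁻ s, ENNReal.ofReal (g ((zt, s), w)) ∂PS ≤ 1 := by
    intro zt w
    set f : Fin n → Bool → ℝ≥0∞ := fun i b =>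
      ENNReal.ofReal (Real.exp (Real.log 2 * loss w (zt (i, !b))) *
        (if loss w (zt (i, b)) = 0 then (1:ℝ) else 0)) with hfdef
    have hgprod : ∀ s : Fin n → Bool,
        ENNReal.ofReal (g ((zt, s), w)) = ∏ i, f i (s i) := by
      intro s
      rw [hgdef]
      exact ENNReal.ofReal_prod_of_nonneg fun i _ =>
        mul_nonneg (Real.exp_nonneg _) (by split_ifs <;> norm_num)
    calc ∫⁻ s, ENNReal.ofReal (g ((zt, s), w)) ∂PS
        = ∑ s : Fin n → Bool, ENNReal.ofReal (g ((zt, s), w)) * PS {s} :=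
          lintegral_fintype _
    _ = ∑ s : Fin n → Bool, ∏ i, (f i (s i) * 2⁻¹) := by
          refine Finset.sum_congr rfl fun s _ => ?_
          rw [hgprod s, hPSs s, ← Finset.prod_mul_distrib]
    _ = ∏ i, ∑ b : Bool, (f i b * 2⁻¹) :=
          (Fintype.prod_sum (κ := fun _ : Fin n => Bool) (fun i b => f i b * 2⁻¹)).symm
    _ ≤ 1 := by
          refine Finset.prod_le_one' fun i _ => ?_
          rw [Fintype.sum_bool]
          have hb : f i true + f i false ≤ 2 := by
            have hft : f i true = ENNReal.ofReal
                (Real.exp (Real.log 2 * loss w (zt (i, false))) *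
                  (if loss w (zt (i, true)) = 0 then (1:ℝ) else 0)) := by
              simp [hfdef]
            have hff : f i false = ENNReal.ofReal
                (Real.exp (Real.log 2 * loss w (zt (i, true))) *
                  (if loss w (zt (i, false)) = 0 then (1:ℝ) else 0)) := by
              simp [hfdef]
            by_cases hA : loss w (zt (i, false)) = 0 <;>
              by_cases hB : loss w (zt (i, true)) = 0
            · rw [hft, hff, if_pos hB, if_pos hA, hA, hB]
              norm_num [Real.exp_zero]
            · rw [hft, hff, if_neg hB, if_pos hA, mul_zero, mul_one,
                ENNReal.ofReal_zero, zero_add]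
              calc ENNReal.ofReal (Real.exp (Real.log 2 * loss w (zt (i, true))))
                  ≤ ENNReal.ofReal 2 := ENNReal.ofReal_le_ofReal (hexp2 _ (hloss _ _).2)
              _ = 2 := by norm_num
            · rw [hft, hff, if_pos hB, if_neg hA, mul_zero, mul_one,
                ENNReal.ofReal_zero, add_zero]
              calc ENNReal.ofReal (Real.exp (Real.log 2 * loss w (zt (i, false))))
                  ≤ ENNReal.ofReal 2 := ENNReal.ofReal_le_ofReal (hexp2 _ (hloss _ _).2)
              _ = 2 := by norm_num
            · rw [hft, hff, if_neg hB, if_neg hA, mul_zero, mul_zero,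
                ENNReal.ofReal_zero, add_zero]
              norm_num
          calc f i true * 2⁻¹ + f i false * 2⁻¹ = (f i true + f i false) * 2⁻¹ := by
                rw [add_mul]
          _ ≤ 2 * 2⁻¹ := mul_le_mul_left hb _
          _ = 1 := ENNReal.mul_inv_cancel (by norm_num) (by norm_num)
  have hGm : Measurable fun x : ((Fin n × Bool → Z) × (Fin n → Bool)) × W =>
      ENNReal.ofReal (g x) := hgm.ennreal_ofReal
  have hIQ : ∫⁻ x, ENNReal.ofReal (g x) ∂Q ≤ 1 := by
    rw [hQdef, Measure.lintegral_compProd hGm]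
    have hmeasp : Measurable fun p : (Fin n × Bool → Z) × (Fin n → Bool) =>
        ∫⁻ w, ENNReal.ofReal (g (p, w)) ∂(κQ p) :=
      Measurable.lintegral_kernel_prod_right' hGm
    rw [lintegral_prod _ hmeasp.aemeasurable]
    have hinner : ∀ zt : Fin n × Bool → Z,
        ∫⁻ s, ∫⁻ w, ENNReal.ofReal (g ((zt, s), w)) ∂(κQ (zt, s)) ∂PS
          ≤ 1 := by
      intro zt
      have hswap : ∫⁻ s, ∫⁻ w, ENNReal.ofReal (g ((zt, s), w)) ∂(M zt) ∂PS
          = ∫⁻ w, ∫⁻ s, ENNReal.ofReal (g ((zt, s), w)) ∂PS ∂(M zt) := by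
        refine lintegral_lintegral_swap ?_
        exact (hGm.comp (((measurable_const.prodMk measurable_fst)).prodMk
          measurable_snd)).aemeasurable
      simp only [hκQa]
      rw [hswap]
      calc ∫⁻ w, ∫⁻ s, ENNReal.ofReal (g ((zt, s), w)) ∂PS ∂(M zt)
          ≤ ∫⁻ _w, 1 ∂(M zt) := lintegral_mono fun w => hS zt w
      _ = 1 := by simp
    calc ∫⁻ zt, ∫⁻ s, ∫⁻ w, ENNReal.ofReal (g ((zt, s), w)) ∂(κQ (zt, s)) ∂PS ∂PZt
        ≤ ∫⁻ _zt, 1 ∂PZt := lintegral_mono fun zt => hinner zt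
    _ = 1 := by simp
  -- ghost-sample identity
  have hpopint : ∀ w : W,
      ∫⁻ v, ENNReal.ofReal ((∑ i, loss w (v i)) / (n:ℝ))
        ∂(Measure.pi fun _ : Fin n => PZ)
      = ENNReal.ofReal (popLoss PZ loss w) := by
    intro w
    have hJle : ∫⁻ z, ENNReal.ofReal (loss w z) ∂PZ ≤ 1 := by
      calc ∫⁻ z, ENNReal.ofReal (loss w z) ∂PZ ≤ ∫⁻ _z, 1 ∂PZ :=
        lintegral_mono fun z => ENNReal.ofReal_le_one.2 (hloss w z).2
      _ = 1 := by simp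
    have hpopeq : ENNReal.ofReal (popLoss PZ loss w)
        = ∫⁻ z, ENNReal.ofReal (loss w z) ∂PZ := by
      rw [popLoss, integral_eq_lintegral_of_nonneg_ae (ae_of_all _ fun z => (hloss w z).1)
        (hlw w).aestronglyMeasurable]
      exact ENNReal.ofReal_toReal (lt_of_le_of_lt hJle ENNReal.one_lt_top).ne
    have h1 : ∀ v : Fin n → Z, ENNReal.ofReal ((∑ i, loss w (v i)) / (n:ℝ))
        = (∑ i, ENNReal.ofReal (loss w (v i))) * ((n:ℝ≥0∞))⁻¹ := by
      intro v
      rw [div_eq_mul_inv, ENNReal.ofReal_mul (Finset.sum_nonneg fun i _ => (hloss _ _).1),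
        ENNReal.ofReal_inv_of_pos hnR, ENNReal.ofReal_natCast,
        ENNReal.ofReal_sum_of_nonneg fun i _ => (hloss _ _).1]
    have hmi : ∀ i : Fin n, Measurable fun v : Fin n → Z => ENNReal.ofReal (loss w (v i)) :=
      fun i => ((hlw w).comp (measurable_pi_apply i)).ennreal_ofReal
    simp_rw [h1]
    rw [lintegral_mul_const' _ _ (by simp [hn.ne']),
      lintegral_finset_sum _ fun i _ => hmi i]
    have h2 : ∀ i : Fin n, ∫⁻ v, ENNReal.ofReal (loss w (v i))
        ∂(Measure.pi fun _ : Fin n => PZ) = ∫⁻ z, ENNReal.ofReal (loss w z) ∂PZ := by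
      intro i
      conv_rhs => rw [← aux_pi_map_eval PZ i]
      rw [lintegral_map (by exact (hlw w).ennreal_ofReal) (measurable_pi_apply i)]
    simp_rw [h2]
    rw [Finset.sum_const, Finset.card_univ, Fintype.card_fin, hpopeq]
    rw [nsmul_eq_mul, mul_comm ((n:ℝ≥0∞)) _, mul_assoc,
      ENNReal.mul_inv_cancel (by exact_mod_cast hn.ne') (by simp), mul_one]
  have hpop0 : ∀ w : W, 0 ≤ popLoss PZ loss w :=
    fun w => integral_nonneg fun z => (hloss w z).1
  have hTE : ∫ x, popLoss PZ loss x.2 ∂P = ∫ x, testLoss n loss x ∂P := by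
    have htest0 : ∀ x, 0 ≤ testLoss n loss x := by
      intro x
      exact div_nonneg (Finset.sum_nonneg fun i _ => (hloss _ _).1) hnR.le
    rw [integral_eq_lintegral_of_nonneg_ae
        (f := fun x : ((Fin n × Bool → Z) × (Fin n → Bool)) × W => popLoss PZ loss x.2)
        (ae_of_all _ fun x => hpop0 x.2)
        (Measurable.aestronglyMeasurable (by exact hpopm.comp measurable_snd)),
      integral_eq_lintegral_of_nonneg_ae (ae_of_all _ htest0) htest.aestronglyMeasurable]
    congr 1
    -- lintegral ghost identity
    have hTm : Measurable fun x : ((Fin n × Bool → Z) × (Fin n → Bool)) × W =>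
        ENNReal.ofReal (testLoss n loss x) := htest.ennreal_ofReal
    have hPm : Measurable fun x : ((Fin n × Bool → Z) × (Fin n → Bool)) × W =>
        ENNReal.ofReal (popLoss PZ loss x.2) := (hpopm.comp measurable_snd).ennreal_ofReal
    rw [hPdef, Measure.lintegral_compProd hPm, Measure.lintegral_compProd hTm]
    have hm1 : Measurable fun p : (Fin n × Bool → Z) × (Fin n → Bool) =>
        ∫⁻ w, ENNReal.ofReal (popLoss PZ loss w) ∂(K p) :=
      Measurable.lintegral_kernel_prod_right' (hPm.comp (measurable_fst.prodMk measurable_snd))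
    have hm2 : Measurable fun p : (Fin n × Bool → Z) × (Fin n → Bool) =>
        ∫⁻ w, ENNReal.ofReal (testLoss n loss (p, w)) ∂(K p) :=
      Measurable.lintegral_kernel_prod_right' hTm
    rw [lintegral_prod_symm _ hm1.aemeasurable, lintegral_prod_symm _ hm2.aemeasurable]
    refine lintegral_congr fun s => ?_
    -- fixed s : ghost-sample argument
    have hKs : ∀ u v : Fin n → Z,
        K (ghostMap s (u, v), s) = K (ghostMap s (u, fun _ => z0), s) := by
      intro u v
      refine hK _ _ _ _ fun i => ?_
      simp [ghostMap]
    have hmapEq := ghostMap_map PZ s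
    rw [hPZt, ← hmapEq]
    have hκsm : ∀ g0 : ((Fin n × Bool → Z) × (Fin n → Bool)) × W → ℝ≥0∞,
        Measurable g0 → Measurable fun zt : Fin n × Bool → Z =>
          ∫⁻ w, g0 ((zt, s), w) ∂(K (zt, s)) := by
      intro g0 hg0m
      have : Measurable fun zt : Fin n × Bool → Z =>
          ∫⁻ w, g0 ((zt, s), w) ∂((K.comap (fun zt => (zt, s)) measurable_prodMk_right) zt) :=
        Measurable.lintegral_kernel_prod_right'
          (hg0m.comp ((measurable_fst.prodMk measurable_const).prodMk measurable_snd))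
      exact this
    rw [lintegral_map (hκsm _ hPm) (ghostMap_measurable s),
      lintegral_map (hκsm _ hTm) (ghostMap_measurable s)]
    have hmm1 : Measurable fun uv : (Fin n → Z) × (Fin n → Z) =>
        ∫⁻ w, ENNReal.ofReal (popLoss PZ loss w) ∂(K (ghostMap s uv, s)) :=
      (hκsm _ hPm).comp (ghostMap_measurable s)
    have hmm2 : Measurable fun uv : (Fin n → Z) × (Fin n → Z) =>
        ∫⁻ w, ENNReal.ofReal (testLoss n loss ((ghostMap s uv, s), w)) ∂(K (ghostMap s uv, s)) :=
      (hκsm _ hTm).comp (ghostMap_measurable s)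
    rw [lintegral_prod _ hmm1.aemeasurable, lintegral_prod _ hmm2.aemeasurable]
    refine lintegral_congr fun u => ?_
    -- fixed u
    have hL : ∀ v : Fin n → Z,
        (∫⁻ w, ENNReal.ofReal (testLoss n loss ((ghostMap s (u, v), s), w))
          ∂(K (ghostMap s (u, v), s)))
        = ∫⁻ w, ENNReal.ofReal ((∑ i, loss w (v i)) / (n:ℝ))
            ∂(K (ghostMap s (u, fun _ => z0), s)) := by
      intro v
      rw [hKs u v]
      refine lintegral_congr fun w => ?_
      congr 2
      · simp only [testLoss]
        congr 1
        refine Finset.sum_congr rfl fun i _ => ?_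
        congr 1
        simp [ghostMap, if_neg (Bool.not_ne_self (s i))]
    have hR : ∀ v : Fin n → Z,
        (∫⁻ w, ENNReal.ofReal (popLoss PZ loss w) ∂(K (ghostMap s (u, v), s)))
        = ∫⁻ w, ENNReal.ofReal (popLoss PZ loss w)
            ∂(K (ghostMap s (u, fun _ => z0), s)) := fun v => by rw [hKs u v]
    simp_rw [hR, hL]
    rw [lintegral_const]
    simp only [measure_univ, mul_one]
    have hswap2 : ∫⁻ v, ∫⁻ w, ENNReal.ofReal ((∑ i, loss w (v i)) / (n:ℝ))
          ∂(K (ghostMap s (u, fun _ => z0), s)) ∂(Measure.pi fun _ : Fin n => PZ)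
        = ∫⁻ w, ∫⁻ v, ENNReal.ofReal ((∑ i, loss w (v i)) / (n:ℝ))
            ∂(Measure.pi fun _ : Fin n => PZ) ∂(K (ghostMap s (u, fun _ => z0), s)) := by
      refine lintegral_lintegral_swap ?_
      refine Measurable.aemeasurable ?_
      refine Measurable.ennreal_ofReal ?_
      refine Measurable.div_const ?_ _
      refine Finset.measurable_sum _ fun i _ => ?_
      exact hlossmeas.comp (measurable_snd.prodMk ((measurable_pi_apply i).comp measurable_fst))
    rw [hswap2]
    exact (lintegral_congr fun w => hpopint w).symm
  -- conclusion
  haveI : IsProbabilityMeasure P := by rw [hPdef]; infer_instance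
  haveI : IsProbabilityMeasure Q := by rw [hQdef]; infer_instance
  have hcm := aux_cm P Q ((2:ℝ≥0∞)^n) (ENNReal.pow_ne_top (by norm_num)) hPle hgm hg0 hIQ
    (hae.mono fun x hx => hx.2) hlogInt
  have hEq : ∫ x, Real.log (g x) ∂P = ((n:ℝ) * Real.log 2) * ∫ x, testLoss n loss x ∂P := by
    rw [← integral_const_mul]
    exact integral_congr_ae (hae.mono fun x hx => hx.1)
  rw [hTE, le_div_iff₀ (by positivity)]
  calc (∫ x, testLoss n loss x ∂P) * ((n:ℝ) * Real.log 2)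
      = ((n:ℝ) * Real.log 2) * ∫ x, testLoss n loss x ∂P := mul_comm _ _
  _ = ∫ x, Real.log (g x) ∂P := hEq.symm
  _ ≤ klDiv' P Q := hcm
end
end

section
/- (Corollary 3, interpolating PAC-Bayesian bound) In the random-subset setting, assume L_{Z(S)}(W) = 0 almost surely under P_{WZ̃S}, and let δ ∈ (0,1). Then with probability at least 1 − δ over (Z̃, S) ~ P_{Z̃S}: E_{P_{W|Z̃S}}[L_{Z(S̄)}(W)] ≤ (KL(P_{W|Z̃S} ‖ P_{W|Z̃}) + log(1/δ))/(n·log 2), where P_{W|Z̃} is the marginalization of P_S P_{W|Z̃S} over S. -/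
open MeasureTheory ProbabilityTheory Real
open scoped ENNReal

noncomputable section

namespace Stmt12Aux

/-- elementary bound: `t · max 0 (−log t) ≤ 2` for `t ≥ 0`. -/
lemma mul_neg_log_le_two {t : ℝ} (ht : 0 ≤ t) : t * max 0 (-Real.log t) ≤ 2 := by
  rcases eq_or_lt_of_le ht with h | h
  · simp [← h]
  rcases le_or_gt 1 t with h1 | h1
  · have hl : 0 ≤ Real.log t := Real.log_nonneg h1
    have : max 0 (-Real.log t) = 0 := max_eq_left (by linarith)
    rw [this, mul_zero]; norm_num
  · have := Real.abs_log_mul_self_lt t h h1.le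
    have h2 : t * (-Real.log t) ≤ 1 := by
      have : |Real.log t * t| = -(Real.log t * t) ∨ |Real.log t * t| = Real.log t * t :=
        (abs_choice _).symm.imp (fun h => h) (fun h => h) |>.symm.elim (fun h => Or.inr h)
          (fun h => Or.inl h)
      nlinarith [abs_nonneg (Real.log t * t), le_abs_self (Real.log t * t),
        neg_abs_le (Real.log t * t)]
    rcases le_total (-Real.log t) 0 with h3 | h3
    · rw [max_eq_left h3]; nlinarith
    · rw [max_eq_right h3]; nlinarith

/-- the per-sample factor. -/
def qfun (a b : ℝ) : ℝ≥0∞ :=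
  if a = 0 then ENNReal.ofReal (Real.exp (Real.log 2 * b)) else 0

lemma qfun_le_two {a b : ℝ} (hb : b ≤ 1) : qfun a b ≤ 2 := by
  unfold qfun
  split_ifs with h
  · calc ENNReal.ofReal (Real.exp (Real.log 2 * b))
        ≤ ENNReal.ofReal (Real.exp (Real.log 2 * 1)) := by
          apply ENNReal.ofReal_le_ofReal
          exact Real.exp_le_exp.mpr (by nlinarith [Real.log_nonneg (by norm_num : (1:ℝ) ≤ 2)])
      _ = 2 := by rw [mul_one, Real.exp_log (by norm_num)]; norm_num
  · exact zero_le

lemma qfun_add_le {a b : ℝ} (ha : a ∈ Set.Icc (0:ℝ) 1) (hb : b ∈ Set.Icc (0:ℝ) 1) :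
    qfun a b + qfun b a ≤ 2 := by
  by_cases h1 : a = 0 <;> by_cases h2 : b = 0
  · subst h1 h2
    simp only [qfun, if_pos rfl, mul_zero, Real.exp_zero, ENNReal.ofReal_one]
    norm_num
  · have : qfun b a = 0 := by simp [qfun, h2]
    rw [this, add_zero]; exact qfun_le_two hb.2
  · have : qfun a b = 0 := by simp [qfun, h1]
    rw [this, zero_add]; exact qfun_le_two ha.2
  · have ha0 : qfun a b = 0 := by simp [qfun, h1]
    have hb0 : qfun b a = 0 := by simp [qfun, h2]
    rw [ha0, hb0, add_zero]
    exact zero_le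

lemma measurable_qfun : Measurable fun ab : ℝ × ℝ => qfun ab.1 ab.2 := by
  unfold qfun
  refine Measurable.ite ?_ ?_ measurable_const
  · exact measurable_fst (measurableSet_singleton (0:ℝ))
  · exact ENNReal.measurable_ofReal.comp
      (Real.measurable_exp.comp (measurable_snd.const_mul _))

/-- the supermartingale-type function `g`. -/
def gfun {Z W : Type*} (n : ℕ) (loss : W → Z → ℝ)
    (x : ((Fin n × Bool → Z) × (Fin n → Bool)) × W) : ℝ≥0∞ :=
  ∏ i, qfun (loss x.2 (x.1.1 (i, x.1.2 i))) (loss x.2 (x.1.1 (i, !x.1.2 i)))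

variable {Z W : Type*} [MeasurableSpace Z] [MeasurableSpace W]

lemma measurable_eval_choice (n : ℕ) (c : Bool → Bool) (i : Fin n) :
    Measurable fun x : ((Fin n × Bool → Z) × (Fin n → Bool)) × W =>
      x.1.1 (i, c (x.1.2 i)) := by
  have h : (fun x : ((Fin n × Bool → Z) × (Fin n → Bool)) × W => x.1.1 (i, c (x.1.2 i)))
      = fun x => if c (x.1.2 i) = true then x.1.1 (i, true) else x.1.1 (i, false) := by
    funext x; cases hcb : c (x.1.2 i) <;> simp [hcb]
  rw [h]
  have hcond : MeasurableSet {x : ((Fin n × Bool → Z) × (Fin n → Bool)) × W |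
      c (x.1.2 i) = true} := by
    have : Measurable fun x : ((Fin n × Bool → Z) × (Fin n → Bool)) × W => x.1.2 i :=
      (measurable_pi_apply i).comp measurable_fst.snd
    exact this ((Set.toFinite (c ⁻¹' {true})).measurableSet)
  exact Measurable.ite hcond
    ((measurable_pi_apply (i, true)).comp measurable_fst.fst)
    ((measurable_pi_apply (i, false)).comp measurable_fst.fst)

lemma measurable_lossTerm {loss : W → Z → ℝ} (hloss : Measurable (Function.uncurry loss))
    (n : ℕ) (c : Bool → Bool) (i : Fin n) :
    Measurable fun x : ((Fin n × Bool → Z) × (Fin n → Bool)) × W =>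
      loss x.2 (x.1.1 (i, c (x.1.2 i))) :=
  hloss.comp (measurable_snd.prodMk (measurable_eval_choice n c i))

lemma measurable_gfun {loss : W → Z → ℝ} (hloss : Measurable (Function.uncurry loss))
    (n : ℕ) : Measurable (gfun n loss) := by
  unfold gfun
  refine Finset.measurable_prod _ fun i _ => ?_
  exact measurable_qfun.comp
    ((measurable_lossTerm hloss n (fun b => b) i).prodMk
      (measurable_lossTerm hloss n (fun b => !b) i))

/-- Donsker–Varadhan-type (Gibbs) inequality. -/
lemma gibbs {α : Type*} [MeasurableSpace α] (μ ν : Measure α)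
    [IsProbabilityMeasure μ] [IsProbabilityMeasure ν]
    {C : ℝ≥0∞} (hC0 : C ≠ 0) (hCt : C ≠ ∞) (hle : μ ≤ C • ν)
    {g : α → ℝ≥0∞} (hg : Measurable g)
    {F : α → ℝ}
    (hgF : ∀ᵐ x ∂μ, g x = ENNReal.ofReal (Real.exp (F x)))
    (hc0 : ∫⁻ x, g x ∂ν ≠ 0) (hct : ∫⁻ x, g x ∂ν ≠ ∞)
    (hFint : Integrable F μ) :
    ∫ x, F x ∂μ ≤ ∫ x, Real.log ((μ.rnDeriv ν x).toReal) ∂μ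
      + Real.log (∫⁻ x, g x ∂ν).toReal := by
  set r := μ.rnDeriv ν with hr_def
  set c := ∫⁻ x, g x ∂ν with hc_def
  have hacCν : μ ≪ C • ν := Measure.absolutelyContinuous_of_le hle
  have hCν : (C • ν) ≪ ν := fun s hs => by simp [Measure.smul_apply, hs]
  have hac : μ ≪ ν := hacCν.trans hCν
  have hr_meas : Measurable r := Measure.measurable_rnDeriv μ ν
  have hr_pos : ∀ᵐ x ∂μ, 0 < r x := Measure.rnDeriv_pos hac
  haveI : IsFiniteMeasure (C • ν) := by
    refine ⟨?_⟩
    rw [Measure.smul_apply, smul_eq_mul]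
    exact ENNReal.mul_lt_top hCt.lt_top (measure_lt_top ν _)
  have hr_leC : ∀ᵐ x ∂ν, r x ≤ C := by
    have h1 : μ.rnDeriv (C • ν) ≤ᵐ[C • ν] 1 := Measure.rnDeriv_le_one_of_le hle
    have h1' : μ.rnDeriv (C • ν) ≤ᵐ[ν] 1 := by
      rwa [Filter.EventuallyLE, Measure.ae_ennreal_smul_measure_eq hC0] at h1
    have h2 : μ.rnDeriv (C • ν) =ᵐ[ν] C⁻¹ • μ.rnDeriv ν :=
      Measure.rnDeriv_smul_right_of_ne_top μ ν hC0 hCt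
    filter_upwards [h1', h2] with x hx1 hx2
    have : C⁻¹ * r x ≤ 1 := by
      have h := hx1; rw [hx2] at h; simpa using h
    calc r x = C * (C⁻¹ * r x) := by
          rw [← mul_assoc, ENNReal.mul_inv_cancel hC0 hCt, one_mul]
      _ ≤ C * 1 := by exact mul_le_mul_right this C
      _ = C := mul_one C
  have hr_leC' : ∀ᵐ x ∂μ, r x ≤ C := hac.ae_le hr_leC
  set L : α → ℝ := fun x => Real.log ((r x).toReal) with hL_def
  have hL_meas : Measurable L := Real.measurable_log.comp hr_meas.ennreal_toReal
  -- Integrability of L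
  have hNmeas : Measurable fun x => ENNReal.ofReal (max 0 (-L x)) :=
    ENNReal.measurable_ofReal.comp (measurable_const.max hL_meas.neg)
  have hN_le : ∫⁻ x, ENNReal.ofReal (max 0 (-L x)) ∂μ ≤ 2 := by
    rw [← lintegral_rnDeriv_mul hac hNmeas.aemeasurable]
    calc ∫⁻ x, r x * ENNReal.ofReal (max 0 (-L x)) ∂ν
        ≤ ∫⁻ _, (2:ℝ≥0∞) ∂ν := by
          refine lintegral_mono_ae ?_
          filter_upwards [Measure.rnDeriv_lt_top μ ν] with x hx
          have hx' : r x = ENNReal.ofReal ((r x).toReal) := (ENNReal.ofReal_toReal hx.ne).symm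
          rw [hx', ← ENNReal.ofReal_mul ENNReal.toReal_nonneg]
          calc ENNReal.ofReal ((r x).toReal * max 0 (-Real.log ((r x).toReal)))
              ≤ ENNReal.ofReal 2 :=
                ENNReal.ofReal_le_ofReal (mul_neg_log_le_two ENNReal.toReal_nonneg)
            _ = 2 := by norm_num
      _ = 2 := by simp
  have hLint : Integrable L μ := by
    refine ⟨hL_meas.aestronglyMeasurable, ?_⟩
    rw [hasFiniteIntegral_def]
    have hb : ∀ᵐ x ∂μ, (‖L x‖₊ : ℝ≥0∞)
        ≤ ENNReal.ofReal (max 0 (Real.log C.toReal)) + ENNReal.ofReal (max 0 (-L x)) := by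
      filter_upwards [hr_pos, hr_leC'] with x hx1 hx2
      have hrt : 0 < (r x).toReal :=
        ENNReal.toReal_pos hx1.ne' (hx2.trans_lt hCt.lt_top).ne
      have hLle : L x ≤ max 0 (Real.log C.toReal) :=
        le_max_of_le_right (Real.log_le_log hrt (ENNReal.toReal_mono hCt hx2))
      have habs : |L x| ≤ max 0 (Real.log C.toReal) + max 0 (-L x) := by
        rcases le_total 0 (L x) with h | h
        · rw [abs_of_nonneg h]
          have := le_max_left (0:ℝ) (-L x)
          linarith
        · rw [abs_of_nonpos h]
          have := le_max_left (0:ℝ) (Real.log C.toReal)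
          have := le_max_right (0:ℝ) (-L x)
          linarith
      calc (‖L x‖₊ : ℝ≥0∞) = ENNReal.ofReal |L x| := Real.enorm_eq_ofReal_abs _
        _ ≤ ENNReal.ofReal (max 0 (Real.log C.toReal) + max 0 (-L x)) :=
            ENNReal.ofReal_le_ofReal habs
        _ ≤ _ := ENNReal.ofReal_add_le
    calc ∫⁻ x, (‖L x‖₊ : ℝ≥0∞) ∂μ
        ≤ ∫⁻ x, (ENNReal.ofReal (max 0 (Real.log C.toReal))
            + ENNReal.ofReal (max 0 (-L x))) ∂μ := lintegral_mono_ae hb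
      _ = ENNReal.ofReal (max 0 (Real.log C.toReal)) + ∫⁻ x, ENNReal.ofReal (max 0 (-L x)) ∂μ := by
          rw [lintegral_add_left measurable_const]; simp
      _ ≤ ENNReal.ofReal (max 0 (Real.log C.toReal)) + 2 := by exact add_le_add_right hN_le _
      _ < ∞ := by finiteness
  -- the Jensen-free change-of-measure step
  set H : α → ℝ≥0∞ := fun x => g x / (r x * c) with hH_def
  have hH_meas : Measurable H := hg.div (hr_meas.mul_const c)
  have step1 : ∫⁻ x, H x ∂μ ≤ 1 := by
    rw [← lintegral_rnDeriv_mul hac hH_meas.aemeasurable]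
    calc ∫⁻ x, r x * H x ∂ν ≤ ∫⁻ x, g x * c⁻¹ ∂ν := by
          refine lintegral_mono fun x => ?_
          rw [hH_def]
          simp only [div_eq_mul_inv]
          rw [ENNReal.mul_inv (Or.inr hct) (Or.inr hc0)]
          calc r x * (g x * ((r x)⁻¹ * c⁻¹)) = (r x * (r x)⁻¹) * (g x * c⁻¹) := by ring
            _ ≤ 1 * (g x * c⁻¹) := mul_le_mul_left (ENNReal.mul_inv_le_one _) _
            _ = g x * c⁻¹ := one_mul _
      _ = c * c⁻¹ := by rw [lintegral_mul_const' _ _ (ENNReal.inv_ne_top.mpr hc0)]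
      _ ≤ 1 := ENNReal.mul_inv_le_one c
  have hH_fin : ∀ᵐ x ∂μ, H x < ∞ := by
    filter_upwards [hr_pos, hgF] with x hx1 hx2
    refine ENNReal.div_lt_top ?_ ?_
    · rw [hx2]; exact ENNReal.ofReal_ne_top
    · exact mul_ne_zero hx1.ne' hc0
  have hHint : Integrable (fun x => (H x).toReal) μ :=
    integrable_toReal_of_lintegral_ne_top hH_meas.aemeasurable
      (lt_of_le_of_lt step1 (by norm_num)).ne
  have hHle : ∫ x, (H x).toReal ∂μ ≤ 1 := by
    rw [integral_toReal hH_meas.aemeasurable hH_fin]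
    calc (∫⁻ x, H x ∂μ).toReal ≤ (1:ℝ≥0∞).toReal :=
          ENNReal.toReal_mono (by norm_num) step1
      _ = 1 := by simp
  have hct' : 0 < c.toReal := ENNReal.toReal_pos hc0 hct
  have step3 : ∀ᵐ x ∂μ, F x - L x - Real.log c.toReal ≤ (H x).toReal - 1 := by
    filter_upwards [hr_pos, hr_leC', hgF] with x hx1 hx2 hx3
    have hrt : 0 < (r x).toReal :=
      ENNReal.toReal_pos hx1.ne' (hx2.trans_lt hCt.lt_top).ne
    have hHx : (H x).toReal = Real.exp (F x) / ((r x).toReal * c.toReal) := by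
      rw [hH_def]
      simp only
      rw [hx3, ENNReal.toReal_div, ENNReal.toReal_mul, ENNReal.toReal_ofReal (Real.exp_nonneg _)]
    have hHpos : 0 < (H x).toReal := by
      rw [hHx]; positivity
    have hlog : Real.log ((H x).toReal) = F x - L x - Real.log c.toReal := by
      rw [hHx, Real.log_div (Real.exp_ne_zero _) (by positivity),
        Real.log_mul hrt.ne' hct'.ne', Real.log_exp]
      ring
    have := Real.log_le_sub_one_of_pos hHpos
    rw [hlog] at this
    linarith
  have hFL : Integrable (fun x => F x - L x) μ := hFint.sub hLint
  have hFLc : Integrable (fun x => F x - L x - Real.log c.toReal) μ :=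
    hFL.sub (integrable_const _)
  have hH1 : Integrable (fun x => (H x).toReal - 1) μ := hHint.sub (integrable_const _)
  have step4 : ∫ x, (F x - L x - Real.log c.toReal) ∂μ
      ≤ ∫ x, ((H x).toReal - 1) ∂μ :=
    integral_mono_ae hFLc hH1 step3
  have e1 : ∫ x, (F x - L x - Real.log c.toReal) ∂μ
      = ∫ x, F x ∂μ - ∫ x, L x ∂μ - Real.log c.toReal := by
    rw [integral_sub hFL (integrable_const _), integral_sub hFint hLint, integral_const]
    simp
  have e2 : ∫ x, ((H x).toReal - 1) ∂μ = ∫ x, (H x).toReal ∂μ - 1 := by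
    rw [integral_sub hHint (integrable_const _), integral_const]
    simp
  rw [e1, e2] at step4
  linarith

end Stmt12Aux

open Stmt12Aux

/-- Corollary 3: interpolating PAC-Bayesian bound. -/
theorem stmt12
    {Z W : Type*} [MeasurableSpace Z] [MeasurableSpace W]
    (n : ℕ) (hn : 0 < n)
    (PZ : Measure Z) [IsProbabilityMeasure PZ]
    (loss : W → Z → ℝ) (hlossmeas : Measurable (Function.uncurry loss))
    (hloss : ∀ w z, loss w z ∈ Set.Icc (0:ℝ) 1)
    (K : Kernel ((Fin n × Bool → Z) × (Fin n → Bool)) W) [IsMarkovKernel K]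
    (hK : ∀ zt s zt' s', (∀ i, zt (i, s i) = zt' (i, s' i)) → K (zt, s) = K (zt', s'))
    (PZt : Measure ((Fin n × Bool) → Z)) (hPZt : PZt = Measure.pi fun _ => PZ)
    (PS : Measure (Fin n → Bool)) (hPS : PS = Measure.pi fun _ => coin)
    (PWZS : Measure (((Fin n × Bool → Z) × (Fin n → Bool)) × W))
    (hPWZS : PWZS = (PZt.prod PS).bind fun p => (K p).map fun w => (p, w))
    (M : Kernel (Fin n × Bool → Z) W) [IsMarkovKernel M]
    (hM : ∀ z, M z = PS.bind fun s => K (z, s))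
    (MJ : Measure (((Fin n × Bool → Z) × (Fin n → Bool)) × W))
    (hMJ : MJ = (PZt.prod PS).bind fun p => (M p.1).map fun w => (p, w))
    (hinterp : ∀ᵐ x ∂PWZS, trainLoss n loss x = 0)
    (hac1 : PWZS ≪ MJ) (hac2 : MJ ≪ PWZS)
    (δ : ℝ) (hδ0 : 0 < δ) (hδ1 : δ < 1) :
    ENNReal.ofReal (1 - δ) ≤ (PZt.prod PS) {p |
      ∫ w, testLoss n loss (p, w) ∂(K p)
        ≤ (klDiv' (K p) (M p.1) + Real.log (1/δ)) / (n * Real.log 2)} := by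
  haveI : IsProbabilityMeasure PZt := by rw [hPZt]; infer_instance
  haveI : IsProbabilityMeasure PS := by rw [hPS]; infer_instance
  have h2n0 : ((2:ℝ≥0∞) ^ n) ≠ 0 := by positivity
  have h2nt : ((2:ℝ≥0∞) ^ n) ≠ ∞ := ENNReal.pow_ne_top (by norm_num)
  have hg : Measurable (gfun n loss) := measurable_gfun hlossmeas n
  -- singletons of PS
  have hPSsing : ∀ s : Fin n → Bool, PS {s} = ((2:ℝ≥0∞) ^ n)⁻¹ := by
    intro s
    rw [hPS, ← Set.univ_pi_singleton, Measure.pi_pi]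
    have hcoin : ∀ b : Bool, coin {b} = 2⁻¹ := by
      intro b
      rw [coin, PMF.toMeasure_apply_singleton _ _ (measurableSet_singleton b),
        PMF.uniformOfFintype_apply]
      simp
    simp only [hcoin, Finset.prod_const, Finset.card_univ, Fintype.card_fin]
    rw [← ENNReal.inv_pow]
  -- the exponential moment
  set ξ : ((Fin n × Bool → Z) × (Fin n → Bool)) → ℝ≥0∞ :=
    fun p => ∫⁻ w, gfun n loss (p, w) ∂(M p.1) with hξ_def
  have hξmeas : Measurable ξ := by
    have : Measurable (Function.uncurry fun p w => gfun n loss (p, w)) := by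
      exact hg
    exact Measurable.lintegral_kernel_prod_right
      (κ := M.comap Prod.fst measurable_fst) this
  have hξ1 : ∫⁻ p, ξ p ∂(PZt.prod PS) ≤ 1 := by
    rw [lintegral_prod (μ := PZt) (ν := PS) _ hξmeas.aemeasurable]
    calc ∫⁻ z, ∫⁻ s, ξ (z, s) ∂PS ∂PZt ≤ ∫⁻ _, 1 ∂PZt := by
          refine lintegral_mono fun z => ?_
          have hswap : ∫⁻ s, ∫⁻ w, gfun n loss ((z, s), w) ∂(M z) ∂PS
              = ∫⁻ w, ∫⁻ s, gfun n loss ((z, s), w) ∂PS ∂(M z) := by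
            refine lintegral_lintegral_swap ?_
            exact (hg.comp (((measurable_const.prodMk measurable_fst)).prodMk
              measurable_snd)).aemeasurable
          have hxi : ∫⁻ s, ξ (z, s) ∂PS
              = ∫⁻ s, ∫⁻ w, gfun n loss ((z, s), w) ∂(M z) ∂PS := rfl
          rw [hxi, hswap]
          calc ∫⁻ w, ∫⁻ s, gfun n loss ((z, s), w) ∂PS ∂(M z)
              ≤ ∫⁻ _, 1 ∂(M z) := by
                refine lintegral_mono fun w => ?_
                -- compute inner integral over s
                rw [lintegral_fintype]
                simp only [hPSsing]
                rw [← Finset.sum_mul]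
                have hfac : ∑ s : Fin n → Bool, gfun n loss ((z, s), w)
                    = ∏ i : Fin n, ∑ b : Bool,
                      qfun (loss w (z (i, b))) (loss w (z (i, !b))) := by
                  rw [Fintype.prod_sum (fun i b =>
                    qfun (loss w (z (i, b))) (loss w (z (i, !b))))]
                  rfl
                rw [hfac]
                have hprod : (∏ i : Fin n, ∑ b : Bool,
                    qfun (loss w (z (i, b))) (loss w (z (i, !b)))) ≤ 2 ^ n := by
                  calc (∏ i : Fin n, ∑ b : Bool,
                      qfun (loss w (z (i, b))) (loss w (z (i, !b))))
                      ≤ ∏ _i : Fin n, (2:ℝ≥0∞) := by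
                        refine Finset.prod_le_prod' fun i _ => ?_
                        rw [Fintype.sum_bool]
                        simpa using qfun_add_le (hloss w (z (i, true))) (hloss w (z (i, false)))
                    _ = 2 ^ n := by simp
                calc (∏ i : Fin n, ∑ b : Bool,
                    qfun (loss w (z (i, b))) (loss w (z (i, !b)))) * ((2:ℝ≥0∞) ^ n)⁻¹
                    ≤ 2 ^ n * ((2:ℝ≥0∞) ^ n)⁻¹ := mul_le_mul_left hprod _
                  _ ≤ 1 := ENNReal.mul_inv_le_one _
            _ = 1 := by simp
      _ = 1 := by simp
  -- Markov inequality
  set Bad : Set ((Fin n × Bool → Z) × (Fin n → Bool)) :=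
    {p | ENNReal.ofReal (1/δ) ≤ ξ p} with hBad_def
  have hBadmeas : MeasurableSet Bad := hξmeas measurableSet_Ici
  have hBadle : (PZt.prod PS) Bad ≤ ENNReal.ofReal δ := by
    have h := (mul_meas_ge_le_lintegral₀ hξmeas.aemeasurable
      (ENNReal.ofReal (1/δ))).trans hξ1
    have hinv : (ENNReal.ofReal (1/δ))⁻¹ = ENNReal.ofReal δ := by
      rw [one_div, ENNReal.ofReal_inv_of_pos hδ0, inv_inv]
    rw [← hinv]
    rw [ENNReal.le_inv_iff_mul_le, mul_comm]
    exact h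
  -- a.e. interpolation
  have hmeasbind : Measurable fun p : (Fin n × Bool → Z) × (Fin n → Bool) =>
      (K p).map fun w => (p, w) := by
    refine Measure.measurable_of_measurable_coe _ fun t ht => ?_
    simp_rw [Measure.map_apply measurable_prodMk_left ht]
    exact Kernel.measurable_kernel_prodMk_left ht
  have hcomp : PWZS = (PZt.prod PS) ⊗ₘ K := by
    rw [hPWZS]
    ext t ht
    rw [Measure.bind_apply ht hmeasbind.aemeasurable, Measure.compProd_apply ht]
    congr 1
    funext p
    rw [Measure.map_apply measurable_prodMk_left ht]
  have hG : ∀ᵐ p ∂(PZt.prod PS), ∀ᵐ w ∂(K p), trainLoss n loss (p, w) = 0 :=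
    Measure.ae_ae_of_ae_compProd (hcomp ▸ hinterp)
  -- main inclusion
  set A : Set ((Fin n × Bool → Z) × (Fin n → Bool)) :=
    {p | ∀ᵐ w ∂(K p), trainLoss n loss (p, w) = 0} with hA_def
  have hAnull : (PZt.prod PS) Aᶜ = 0 := by
    rw [ae_iff] at hG
    exact hG
  have hlog2pos : (0:ℝ) < Real.log 2 := Real.log_pos (by norm_num)
  have hsub : Badᶜ ∩ A ⊆ {p |
      ∫ w, testLoss n loss (p, w) ∂(K p)
        ≤ (klDiv' (K p) (M p.1) + Real.log (1/δ)) / (n * Real.log 2)} := by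
    rintro p ⟨hpB, hpA⟩
    have hptrain : ∀ᵐ w ∂(K p), trainLoss n loss (p, w) = 0 := hpA
    have hξle : ξ p ≤ ENNReal.ofReal (1/δ) := le_of_not_ge hpB
    -- measure comparison
    have hKmeas' : Measurable fun s => K (p.1, s) :=
      (Kernel.measurable K).comp measurable_prodMk_left
    have hνsum : ∀ t : Set W, MeasurableSet t →
        M p.1 t = (∑ s : Fin n → Bool, K (p.1, s) t) * ((2:ℝ≥0∞) ^ n)⁻¹ := by
      intro t ht
      rw [hM, Measure.bind_apply ht hKmeas'.aemeasurable, lintegral_fintype]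
      simp only [hPSsing]
      rw [← Finset.sum_mul]
    have hle : K p ≤ ((2:ℝ≥0∞) ^ n) • (M p.1) := by
      rw [Measure.le_iff]
      intro t ht
      have h1 : K p t * ((2:ℝ≥0∞) ^ n)⁻¹ ≤ M p.1 t := by
        rw [hνsum t ht]
        refine mul_le_mul_left ?_ _
        have := Finset.single_le_sum (f := fun s => K (p.1, s) t)
          (fun s _ => zero_le) (Finset.mem_univ p.2)
        simpa using this
      rw [Measure.smul_apply, smul_eq_mul]
      calc K p t = 2 ^ n * (K p t * ((2:ℝ≥0∞) ^ n)⁻¹) := by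
            rw [mul_comm (K p t), ← mul_assoc, ENNReal.mul_inv_cancel h2n0 h2nt, one_mul]
        _ ≤ 2 ^ n * M p.1 t := mul_le_mul_right h1 _
    -- the function F
    set F : W → ℝ := fun w => Real.log 2 * ∑ i, loss w (p.1 (i, !p.2 i)) with hF_def
    have hFmeas : Measurable F := by
      refine Measurable.const_mul ?_ _
      refine Finset.measurable_sum _ fun i _ => ?_
      exact hlossmeas.comp (measurable_id.prodMk measurable_const)
    have hFnonneg : ∀ w, 0 ≤ F w := by
      intro w
      refine mul_nonneg hlog2pos.le (Finset.sum_nonneg fun i _ => (hloss _ _).1)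
    have hFbd : ∀ w, |F w| ≤ Real.log 2 * n := by
      intro w
      rw [abs_of_nonneg (hFnonneg w)]
      refine mul_le_mul_of_nonneg_left ?_ hlog2pos.le
      calc (∑ i, loss w (p.1 (i, !p.2 i))) ≤ ∑ _i : Fin n, (1:ℝ) :=
            Finset.sum_le_sum fun i _ => (hloss _ _).2
        _ = n := by simp
    have hFint : Integrable F (K p) := by
      refine (integrable_const (Real.log 2 * n)).mono' hFmeas.aestronglyMeasurable ?_
      exact ae_of_all _ fun w => by simpa using hFbd w
    -- g = exp F a.e.
    have hgF : ∀ᵐ w ∂(K p), gfun n loss (p, w) = ENNReal.ofReal (Real.exp (F w)) := by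
      filter_upwards [hptrain] with w hw
      have hsum0 : ∑ i, loss w (p.1 (i, p.2 i)) = 0 := by
        have : (∑ i, loss w (p.1 (i, p.2 i))) / n = 0 := hw
        rcases div_eq_zero_iff.mp this with h | h
        · exact h
        · exact absurd h (by positivity)
      have hterm0 : ∀ i : Fin n, loss w (p.1 (i, p.2 i)) = 0 := by
        have := (Finset.sum_eq_zero_iff_of_nonneg
          (fun i _ => (hloss w (p.1 (i, p.2 i))).1)).mp hsum0
        exact fun i => this i (Finset.mem_univ i)
      rw [gfun]
      have : ∀ i : Fin n,
          qfun (loss w (p.1 (i, p.2 i))) (loss w (p.1 (i, !p.2 i)))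
          = ENNReal.ofReal (Real.exp (Real.log 2 * loss w (p.1 (i, !p.2 i)))) := by
        intro i
        rw [qfun, if_pos (hterm0 i)]
      rw [Finset.prod_congr rfl fun i _ => this i,
        ← ENNReal.ofReal_prod_of_nonneg (fun i _ => (Real.exp_nonneg _)),
        ← Real.exp_sum, ← Finset.mul_sum]
    -- bounds on c
    have hgle : ∀ w, gfun n loss (p, w) ≤ 2 ^ n := by
      intro w
      rw [gfun]
      calc (∏ i, qfun (loss w (p.1 (i, p.2 i))) (loss w (p.1 (i, !p.2 i))))
          ≤ ∏ _i : Fin n, (2:ℝ≥0∞) :=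
            Finset.prod_le_prod' fun i _ => qfun_le_two (hloss _ _).2
        _ = 2 ^ n := by simp
    have hct : ξ p ≠ ∞ := by
      have : ξ p ≤ 2 ^ n := by
        rw [hξ_def]
        calc ∫⁻ w, gfun n loss (p, w) ∂(M p.1) ≤ ∫⁻ _, (2:ℝ≥0∞) ^ n ∂(M p.1) :=
              lintegral_mono fun w => hgle w
          _ = 2 ^ n := by simp
      exact (this.trans_lt h2nt.lt_top).ne
    have hμint1 : (1:ℝ≥0∞) ≤ ∫⁻ w, gfun n loss (p, w) ∂(K p) := by
      have h1 : (1:ℝ≥0∞) = ∫⁻ _, 1 ∂(K p) := by simp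
      rw [h1]
      refine lintegral_mono_ae ?_
      filter_upwards [hgF] with w hw
      rw [hw]
      calc (1:ℝ≥0∞) = ENNReal.ofReal (Real.exp 0) := by simp
        _ ≤ ENNReal.ofReal (Real.exp (F w)) :=
          ENNReal.ofReal_le_ofReal (Real.exp_le_exp.mpr (hFnonneg w))
    have hc0 : ξ p ≠ 0 := by
      intro h0
      have hμν : ∫⁻ w, gfun n loss (p, w) ∂(K p) ≤ 2 ^ n * ξ p := by
        rw [hξ_def]; show _ ≤ (2:ℝ≥0∞) ^ n • ∫⁻ w, gfun n loss (p, w) ∂(M p.1); rw [← lintegral_smul_measure]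
        exact lintegral_mono' hle le_rfl
      rw [h0, mul_zero] at hμν
      exact absurd (hμint1.trans hμν) (by norm_num)
    -- apply Gibbs
    have hGibbs := gibbs (K p) (M p.1) h2n0 h2nt hle
      (hg.comp (measurable_prodMk_left)) hgF hc0 hct hFint
    have hcle : (ξ p).toReal ≤ 1/δ :=
      ENNReal.toReal_le_of_le_ofReal (by positivity) hξle
    have hclog : Real.log (ξ p).toReal ≤ Real.log (1/δ) :=
      Real.log_le_log (ENNReal.toReal_pos hc0 hct) hcle
    have hkl : klDiv' (K p) (M p.1)
        = ∫ w, Real.log (((K p).rnDeriv (M p.1) w).toReal) ∂(K p) := rfl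
    have hmain : Real.log 2 * ∫ w, (∑ i, loss w (p.1 (i, !p.2 i))) ∂(K p)
        ≤ klDiv' (K p) (M p.1) + Real.log (1/δ) := by
      have h1 : ∫ w, F w ∂(K p)
          = Real.log 2 * ∫ w, (∑ i, loss w (p.1 (i, !p.2 i))) ∂(K p) := by
        rw [hF_def]
        exact integral_const_mul _ _
      rw [← h1, hkl]
      calc ∫ w, F w ∂(K p)
          ≤ ∫ w, Real.log (((K p).rnDeriv (M p.1) w).toReal) ∂(K p)
            + Real.log (ξ p).toReal := hGibbs
        _ ≤ _ := by linarith
    -- conclude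
    show ∫ w, testLoss n loss (p, w) ∂(K p)
        ≤ (klDiv' (K p) (M p.1) + Real.log (1/δ)) / (n * Real.log 2)
    have htest : ∫ w, testLoss n loss (p, w) ∂(K p)
        = (∫ w, (∑ i, loss w (p.1 (i, !p.2 i))) ∂(K p)) / n := by
      simp only [testLoss]
      exact integral_div _ _
    rw [htest]
    have hnpos : (0:ℝ) < n := Nat.cast_pos.mpr hn
    rw [div_le_div_iff₀ hnpos (by positivity)]
    nlinarith [hmain, hnpos]
  -- finish
  have hTineq : (PZt.prod PS) Badᶜ ≤ (PZt.prod PS) {p |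
      ∫ w, testLoss n loss (p, w) ∂(K p)
        ≤ (klDiv' (K p) (M p.1) + Real.log (1/δ)) / (n * Real.log 2)} := by
    rw [← measure_inter_conull hAnull]
    exact measure_mono hsub
  refine le_trans ?_ hTineq
  rw [prob_compl_eq_one_sub hBadmeas]
  have : ENNReal.ofReal (1 - δ) = 1 - ENNReal.ofReal δ := by
    rw [ENNReal.ofReal_sub _ hδ0.le, ENNReal.ofReal_one]
  rw [this]
  exact tsub_le_tsub_left hBadle 1

end
end
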